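/- arXiv:1703.10374 — 4 statements merged into one kernel-verified Lean document; each statement's English description precedes it below -/
import Mathlib

section
/- Every ANR_{B0}-resolution p : X → X of a topological space X over B0 is an ANR_{B0}-expansion, i.e. p satisfies conditions (E1) and (E2). -/
open Set Topology TopologicalSpace unitInterval

universe u

/-- `f` is a fiber preserving (f.p.) map from `(X, πX)` to `(Y, πY)` over `B0`. -/
def IsFPMap {B0 X Y : Type u} [TopologicalSpace B0] [TopologicalSpace X] [TopologicalSpace Y]
    (πX : X → B0) (πY : Y → B0) (f : X → Y) : Prop :=
  Continuous f ∧ ∀ x, πY (f x) = πX x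

/-- Two f.p. maps are f.p. homotopic (homotopic over `B0`). -/
def FPHomotopic {B0 X Y : Type u} [TopologicalSpace B0] [TopologicalSpace X] [TopologicalSpace Y]
    (πX : X → B0) (πY : Y → B0) (f g : X → Y) : Prop :=
  ∃ H : X × unitInterval → Y, Continuous H ∧
    (∀ x, H (x, 0) = f x) ∧ (∀ x, H (x, 1) = g x) ∧
    ∀ x t, πY (H (x, t)) = πX x

/-- A metrizable space `(Y, πY)` over `B0` is an absolute neighbourhood retract over `B0`:
for every closed f.p. embedding into a metrizable space over `B0` there is a neighbourhood of the
image and an f.p. retraction of that neighbourhood onto the image. -/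
def IsFiberANR (B0 : Type u) [TopologicalSpace B0] (Y : Type u) [TopologicalSpace Y]
    (πY : Y → B0) : Prop :=
  MetrizableSpace Y ∧ Continuous πY ∧
  ∀ (X : Type u) (_ : TopologicalSpace X), MetrizableSpace X →
    ∀ πX : X → B0, Continuous πX →
    ∀ i : Y → X, IsClosedEmbedding i → (∀ y, πX (i y) = πY y) →
    ∃ U : Set X, U ∈ nhdsSet (Set.range i) ∧
    ∃ r : U → X, Continuous r ∧ (∀ u : U, r u ∈ Set.range i) ∧
      (∀ u : U, πX (r u) = πX u) ∧ ∀ u : U, (u : X) ∈ Set.range i → r u = u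

/-- A metrizable space `(Y, πY)` over `B0` is an absolute neighbourhood extensor over `B0`. -/
def IsFiberANE (B0 : Type u) [TopologicalSpace B0] (Y : Type u) [TopologicalSpace Y]
    (πY : Y → B0) : Prop :=
  MetrizableSpace Y ∧ Continuous πY ∧
  ∀ (X : Type u) (_ : TopologicalSpace X), MetrizableSpace X →
    ∀ πX : X → B0, Continuous πX →
    ∀ A : Set X, IsClosed A →
    ∀ f : A → Y, Continuous f → (∀ a : A, πY (f a) = πX a) →
    ∃ U : Set X, U ∈ nhdsSet A ∧
    ∃ g : U → Y, Continuous g ∧ (∀ u : U, πY (g u) = πX u) ∧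
      ∀ (a : X) (ha : a ∈ A) (hu : a ∈ U), g ⟨a, hu⟩ = f ⟨a, ha⟩

/-- An open cover of a topological space. -/
def IsOpenCover {Y : Type u} [TopologicalSpace Y] (𝒰 : Set (Set Y)) : Prop :=
  (∀ V ∈ 𝒰, IsOpen V) ∧ ⋃₀ 𝒰 = Set.univ

/-- Two maps are `𝒰`-near. -/
def UNear {X Y : Type u} (𝒰 : Set (Set Y)) (f g : X → Y) : Prop :=
  ∀ x, ∃ V ∈ 𝒰, f x ∈ V ∧ g x ∈ V

/-- The (topological) weight of a space: the least cardinality of a basis of its topology. -/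
noncomputable def tweight (X : Type u) [TopologicalSpace X] : Cardinal.{u} :=
  sInf {c | ∃ B : Set (Set X), IsTopologicalBasis B ∧ Cardinal.mk B = c}

/-- An inverse system in `Top_{B0}`: a directed set of indices, spaces over `B0` and f.p.
bonding maps. -/
structure FibInvSys (B0 : Type u) [TopologicalSpace B0] : Type (u + 1) where
  Idx : Type u
  le : Idx → Idx → Prop
  le_refl : ∀ a, le a a
  le_trans : ∀ a b c, le a b → le b c → le a c
  directed : ∀ a b, ∃ c, le a c ∧ le b c
  obj : Idx → Type u
  topInst : ∀ a, TopologicalSpace (obj a)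
  proj : ∀ a, obj a → B0
  proj_cont : ∀ a, @Continuous _ _ (topInst a) _ (proj a)
  bond : ∀ a a', le a a' → obj a' → obj a
  bond_cont : ∀ a a' (h : le a a'), @Continuous _ _ (topInst a') (topInst a) (bond a a' h)
  bond_fp : ∀ a a' (h : le a a') (x : obj a'), proj a (bond a a' h x) = proj a' x
  bond_id : ∀ a (x : obj a), bond a a (le_refl a) x = x
  bond_comp : ∀ a a' a'' (h : le a a') (h' : le a' a'') (x : obj a''),
    bond a a' h (bond a' a'' h' x) = bond a a'' (le_trans a a' a'' h h') x

attribute [instance] FibInvSys.topInst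

/-- A morphism from a space `(X, πX)` over `B0` to an inverse system in `Top_{B0}`. -/
structure FibMapToSys {B0 : Type u} [TopologicalSpace B0] (X : Type u) [TopologicalSpace X]
    (πX : X → B0) (S : FibInvSys B0) where
  maps : ∀ a : S.Idx, X → S.obj a
  cont : ∀ a, Continuous (maps a)
  fp : ∀ a x, S.proj a (maps a x) = πX x
  comm : ∀ a a' (h : S.le a a') (x : X), S.bond a a' h (maps a' x) = maps a x

section Conditions

variable {B0 : Type u} [TopologicalSpace B0] (X : Type u) [TopologicalSpace X]
  (πX : X → B0) (S : FibInvSys B0)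

/-- Condition (R1) of a resolution over `B0`. -/
def CondR1 (p : FibMapToSys X πX S) : Prop :=
  ∀ (P : Type u) (_ : TopologicalSpace P) (πP : P → B0), IsFiberANR B0 P πP →
    ∀ 𝒰 : Set (Set P), IsOpenCover 𝒰 →
    ∀ h : X → P, IsFPMap πX πP h →
    ∃ (a : S.Idx) (f : S.obj a → P), IsFPMap (S.proj a) πP f ∧
      UNear 𝒰 h fun x => f (p.maps a x)

/-- Condition (R2) of a resolution over `B0`. -/
def CondR2 (p : FibMapToSys X πX S) : Prop :=
  ∀ (P : Type u) (_ : TopologicalSpace P) (πP : P → B0), IsFiberANR B0 P πP →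
    ∀ 𝒰 : Set (Set P), IsOpenCover 𝒰 →
    ∃ 𝒰' : Set (Set P), IsOpenCover 𝒰' ∧
      ∀ (a : S.Idx) (f f' : S.obj a → P), IsFPMap (S.proj a) πP f → IsFPMap (S.proj a) πP f' →
        UNear 𝒰' (fun x => f (p.maps a x)) (fun x => f' (p.maps a x)) →
        ∃ (a' : S.Idx) (h : S.le a a'),
          UNear 𝒰 (fun y => f (S.bond a a' h y)) fun y => f' (S.bond a a' h y)

/-- `p` is a resolution over `B0`. -/
def IsFibResolution (p : FibMapToSys X πX S) : Prop :=
  CondR1 X πX S p ∧ CondR2 X πX S p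

/-- Condition (E1) of an expansion over `B0`. -/
def CondE1 (p : FibMapToSys X πX S) : Prop :=
  ∀ (P : Type u) (_ : TopologicalSpace P) (πP : P → B0), IsFiberANR B0 P πP →
    ∀ f : X → P, IsFPMap πX πP f →
    ∃ (a : S.Idx) (h : S.obj a → P), IsFPMap (S.proj a) πP h ∧
      FPHomotopic πX πP (fun x => h (p.maps a x)) f

/-- Condition (E2) of an expansion over `B0`. -/
def CondE2 (p : FibMapToSys X πX S) : Prop :=
  ∀ (P : Type u) (_ : TopologicalSpace P) (πP : P → B0), IsFiberANR B0 P πP →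
    ∀ (a : S.Idx) (f f' : S.obj a → P), IsFPMap (S.proj a) πP f → IsFPMap (S.proj a) πP f' →
      FPHomotopic πX πP (fun x => f (p.maps a x)) (fun x => f' (p.maps a x)) →
      ∃ (a' : S.Idx) (h : S.le a a'),
        FPHomotopic (S.proj a') πP (fun y => f (S.bond a a' h y)) fun y => f' (S.bond a a' h y)

/-- Two f.p. homotopies `S, T : X × I → P` are f.p. homotopic rel `X × ∂I`. -/
def FPHomotopicRelEnds {P : Type u} [TopologicalSpace P] (πP : P → B0)
    (S T : X × unitInterval → P) : Prop :=
  ∃ G : (X × unitInterval) × unitInterval → P, Continuous G ∧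
    (∀ z, G (z, 0) = S z) ∧ (∀ z, G (z, 1) = T z) ∧
    (∀ z s, πP (G (z, s)) = πX z.1) ∧
    (∀ x s, G ((x, 0), s) = S (x, 0)) ∧ ∀ x s, G ((x, 1), s) = S (x, 1)

/-- Condition (SE2) of a strong expansion over `B0`. -/
def CondSE2 (p : FibMapToSys X πX S) : Prop :=
  ∀ (P : Type u) (_ : TopologicalSpace P) (πP : P → B0), IsFiberANR B0 P πP →
    ∀ (a : S.Idx) (f0 f1 : S.obj a → P), IsFPMap (S.proj a) πP f0 → IsFPMap (S.proj a) πP f1 →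
    ∀ Sh : X × unitInterval → P, Continuous Sh → (∀ x t, πP (Sh (x, t)) = πX x) →
      (∀ x, Sh (x, 0) = f0 (p.maps a x)) → (∀ x, Sh (x, 1) = f1 (p.maps a x)) →
      ∃ (a' : S.Idx) (h : S.le a a') (H : S.obj a' × unitInterval → P),
        Continuous H ∧ (∀ z t, πP (H (z, t)) = S.proj a' z) ∧
        (∀ z, H (z, 0) = f0 (S.bond a a' h z)) ∧
        (∀ z, H (z, 1) = f1 (S.bond a a' h z)) ∧
        FPHomotopicRelEnds X πX πP Sh fun zt => H (p.maps a' zt.1, zt.2)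

/-- `p` is a strong expansion over `B0`. -/
def IsFibStrongExpansion (p : FibMapToSys X πX S) : Prop :=
  CondE1 X πX S p ∧ CondSE2 X πX S p

end Conditions

/-! Every ANR over `B0` is a closed fiberwise neighbourhood retract of `B0 × K` for a convex
subset `K` of a normed space (the Kuratowski–Wojdysławski embedding). Hence f.p. maps into it
that are near enough are f.p. homotopic, by a straight-line homotopy in `K` pushed back by the
retraction; and, by Dugundji's extension theorem, the fiberwise path space of an ANR over `B0`
is again one. (E1) is (R1) applied with such a cover. For (E2), a homotopy
`f ∘ p_a ≃ f' ∘ p_a` is a map into the fiberwise path space; (R1) approximates it by some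
`G ∘ p_a₁`, and (R2) makes the two ends of `G` homotopic to `f` and `f'` at a later index. -/

open scoped BoundedContinuousFunction

lemma UNear.symm {X Y : Type u} {𝒰 : Set (Set Y)} {f g : X → Y} (h : UNear 𝒰 f g) :
    UNear 𝒰 g f :=
  fun x => let ⟨V, hV, hf, hg⟩ := h x; ⟨V, hV, hg, hf⟩

section FiberPreserving

variable {B0 X Y Z : Type u} [TopologicalSpace B0] [TopologicalSpace X] [TopologicalSpace Y]
  [TopologicalSpace Z] {πX : X → B0} {πY : Y → B0} {πZ : Z → B0}

lemma IsFPMap.comp {g : Y → Z} {f : X → Y} (hg : IsFPMap πY πZ g) (hf : IsFPMap πX πY f) :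
    IsFPMap πX πZ fun x => g (f x) :=
  ⟨hg.1.comp hf.1, fun x => (hg.2 _).trans (hf.2 x)⟩

lemma FPHomotopic.continuous_left {f g : X → Y} (h : FPHomotopic πX πY f g) : Continuous f := by
  obtain ⟨H, hc, h0, -⟩ := h
  exact (hc.comp (continuous_id.prodMk continuous_const)).congr h0

lemma FPHomotopic.symm {f g : X → Y} (h : FPHomotopic πX πY f g) : FPHomotopic πX πY g f := by
  obtain ⟨H, hc, h0, h1, hπ⟩ := h
  refine ⟨fun xt => H (xt.1, σ xt.2), by fun_prop, fun x => ?_, fun x => ?_, fun x t => hπ x _⟩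
  · simpa using h1 x
  · simpa using h0 x

lemma FPHomotopic.comp {f g : Y → Z} (h : FPHomotopic πY πZ f g) {k : X → Y}
    (hk : IsFPMap πX πY k) : FPHomotopic πX πZ (fun x => f (k x)) fun x => g (k x) := by
  obtain ⟨H, hc, h0, h1, hπ⟩ := h
  exact ⟨fun xt => H (k xt.1, xt.2), hc.comp (hk.1.prodMap continuous_id), fun x => h0 _,
    fun x => h1 _, fun x t => (hπ _ t).trans (hk.2 x)⟩

lemma fpHomotopic_iff_homotopicWith {f g : C(X, Y)} :
    FPHomotopic πX πY f g ↔ f.HomotopicWith g fun u => ∀ x, πY (u x) = πX x := by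
  constructor
  · rintro ⟨H, hc, h0, h1, hπ⟩
    exact ⟨⟨⟨⟨fun p => H (p.2, p.1), by fun_prop⟩, h0, h1⟩, fun t x => hπ x t⟩⟩
  · rintro ⟨F⟩
    exact ⟨fun xt => F (xt.2, xt.1), by fun_prop, F.apply_zero, F.apply_one, fun x t => F.prop t x⟩

lemma FPHomotopic.trans {f g k : X → Y} (h₁ : FPHomotopic πX πY f g)
    (h₂ : FPHomotopic πX πY g k) : FPHomotopic πX πY f k := by
  lift f to C(X, Y) using h₁.continuous_left
  lift g to C(X, Y) using h₂.continuous_left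
  lift k to C(X, Y) using h₂.symm.continuous_left
  rw [fpHomotopic_iff_homotopicWith] at *
  exact h₁.trans h₂

end FiberPreserving

section Kuratowski

variable {P : Type u} [MetricSpace P]

noncomputable def kuratowskiBCF (x₀ x : P) : P →ᵇ ℝ :=
  BoundedContinuousFunction.mkOfBound ⟨fun y => dist x y - dist x₀ y, by fun_prop⟩
    (2 * dist x x₀) fun y z => by
      rw [Real.dist_eq, two_mul]
      exact (abs_sub _ _).trans (add_le_add (abs_dist_sub_le x x₀ y) (abs_dist_sub_le x x₀ z))

lemma kuratowskiBCF_apply (x₀ x y : P) : kuratowskiBCF x₀ x y = dist x y - dist x₀ y := rfl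

lemma isometry_kuratowskiBCF (x₀ : P) : Isometry (kuratowskiBCF x₀) := by
  refine Isometry.of_dist_eq fun x x' => le_antisymm ?_ ?_
  · refine (BoundedContinuousFunction.dist_le dist_nonneg).2 fun y => ?_
    rw [Real.dist_eq, kuratowskiBCF_apply, kuratowskiBCF_apply, sub_sub_sub_cancel_right]
    exact abs_dist_sub_le x x' y
  · have := BoundedContinuousFunction.dist_coe_le_dist (f := kuratowskiBCF x₀ x)
      (g := kuratowskiBCF x₀ x') x'
    rwa [Real.dist_eq, kuratowskiBCF_apply, kuratowskiBCF_apply, sub_sub_sub_cancel_right,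
      dist_self, sub_zero, abs_of_nonneg dist_nonneg] at this

/-- Kuratowski–Wojdysławski: for `J = kuratowskiBCF x₀` and `w = ∑ cᵢ • J qᵢ` we have
`w x - J x x = ∑ cᵢ d(qᵢ, x)`, so `w` is approximated by `J x` only if `x` is close to each `qᵢ`
with `cᵢ > 0`. -/
lemma mem_range_kuratowskiBCF_of_mem_closure (x₀ : P) {w : P →ᵇ ℝ}
    (hw : w ∈ convexHull ℝ (range (kuratowskiBCF x₀)))
    (hcl : w ∈ closure (range (kuratowskiBCF x₀))) : w ∈ range (kuratowskiBCF x₀) := by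
  set J := kuratowskiBCF x₀
  rw [convexHull_range_eq_exists_affineCombination] at hw
  obtain ⟨s, c, hc0, hc1, rfl⟩ := hw
  rw [s.affineCombination_eq_linear_combination J c hc1] at hcl ⊢
  obtain ⟨q, hqs, hq⟩ : ∃ q ∈ s, 0 < c q := Finset.exists_lt_of_sum_lt (by simp [hc1])
  set w := ∑ i ∈ s, c i • J i
  have hw_apply : ∀ x, w x - J x x = ∑ i ∈ s, c i * dist i x := fun x => by
    simp [w, J, kuratowskiBCF_apply, mul_sub, Finset.sum_sub_distrib, ← Finset.sum_mul, hc1]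
  have hq_near : ∀ x, dist x q ≤ (c q)⁻¹ * dist w (J x) := fun x => by
    rw [le_inv_mul_iff₀ hq, dist_comm]
    calc c q * dist q x ≤ ∑ i ∈ s, c i * dist i x :=
          Finset.single_le_sum (f := fun i => c i * dist i x)
            (fun i hi => mul_nonneg (hc0 i hi) dist_nonneg) hqs
      _ = w x - J x x := (hw_apply x).symm
      _ ≤ dist w (J x) := (le_abs_self _).trans (by
          simpa [Real.dist_eq] using BoundedContinuousFunction.dist_coe_le_dist (f := w) x)
  have hbound : ∀ v ∈ closure (range J), dist w (J q) ≤ (1 + (c q)⁻¹) * dist w v := by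
    refine closure_minimal ?_
      (isClosed_le continuous_const (continuous_const.mul (continuous_const.dist continuous_id)))
    rintro _ ⟨x, rfl⟩
    calc dist w (J q) ≤ dist w (J x) + dist x q := by
          rw [← (isometry_kuratowskiBCF x₀).dist_eq x q]; exact dist_triangle _ _ _
      _ ≤ (1 + (c q)⁻¹) * dist w (J x) := by linarith [hq_near x]
  refine ⟨q, (dist_le_zero.1 ?_).symm⟩
  simpa using hbound w hcl

end Kuratowski

lemma Topology.IsClosedEmbedding.prodMk_left {X Y Z : Type*} [TopologicalSpace X]
    [TopologicalSpace Y] [TopologicalSpace Z] [T2Space Y] {f : X → Y} {g : X → Z}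
    (hf : Continuous f) (hg : IsClosedEmbedding g) : IsClosedEmbedding fun x => (f x, g x) := by
  refine ⟨.of_comp (hf.prodMk hg.continuous) continuous_snd hg.isEmbedding, ?_⟩
  have hrange : range (fun x => (f x, g x)) = Prod.map id g '' {p | f p.2 = p.1} := by
    ext ⟨y, z⟩
    simp only [mem_range, mem_image, mem_ofPred_eq, Prod.exists, Prod.map_apply, id_eq,
      Prod.mk.injEq]
    constructor
    · rintro ⟨x, rfl, rfl⟩
      exact ⟨_, x, rfl, rfl, rfl⟩
    · rintro ⟨_, x, rfl, rfl, rfl⟩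
      exact ⟨x, rfl, rfl⟩
  rw [hrange]
  exact (IsClosedEmbedding.id.prodMap hg).isClosedMap _
    (isClosed_eq (hf.comp continuous_snd) continuous_fst)

lemma isClosedEmbedding_kuratowskiBCF_convexHull {P : Type u} [MetricSpace P] (x₀ : P) :
    IsClosedEmbedding (codRestrict (kuratowskiBCF x₀) (convexHull ℝ (range (kuratowskiBCF x₀)))
      fun x => subset_convexHull ℝ _ (mem_range_self x)) := by
  refine ⟨(isometry_kuratowskiBCF x₀).isEmbedding.codRestrict _ _, ?_⟩
  have hrange : range (codRestrict (kuratowskiBCF x₀) (convexHull ℝ (range (kuratowskiBCF x₀)))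
      fun x => subset_convexHull ℝ _ (mem_range_self x)) =
      Subtype.val ⁻¹' closure (range (kuratowskiBCF x₀)) := by
    ext w
    refine ⟨?_, fun hw => ?_⟩
    · rintro ⟨x, rfl⟩
      exact subset_closure (mem_range_self x)
    · obtain ⟨x, hx⟩ := mem_range_kuratowskiBCF_of_mem_closure x₀ w.2 hw
      exact ⟨x, Subtype.ext hx⟩
  rw [hrange]
  exact isClosed_closure.preimage continuous_subtype_val

structure IsFibNbhdRetract {B0 Y E : Type u} [TopologicalSpace B0] [TopologicalSpace Y]
    [TopologicalSpace E] (πY : Y → B0) (K : Set E) (e : Y → B0 × K) : Prop where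
  continuous : Continuous e
  isClosed_range : IsClosed (range e)
  fst_eq : ∀ y, (e y).1 = πY y
  exists_retraction : ∃ O : Set (B0 × K), IsOpen O ∧ range e ⊆ O ∧
    ∃ r : O → Y, Continuous r ∧ (∀ z, πY (r z) = z.1.1) ∧ ∀ (z : O) (y : Y), z.1 = e y → r z = y

section FibNbhdRetract

variable {B0 Y E : Type u} [TopologicalSpace B0] [TopologicalSpace Y] [TopologicalSpace E]
  {πY : Y → B0} {K : Set E}

lemma isFibNbhdRetract_of_isEmpty [IsEmpty Y] (πY : Y → B0) (K : Set E) :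
    IsFibNbhdRetract πY K isEmptyElim where
  continuous := continuous_of_discreteTopology
  isClosed_range := range_eq_empty (isEmptyElim : Y → B0 × K) ▸ isClosed_empty
  fst_eq := isEmptyElim
  exists_retraction := ⟨∅, isOpen_empty, (range_eq_empty _).subset, fun z => z.2.elim,
    continuous_of_discreteTopology, fun z => z.2.elim, fun z => z.2.elim⟩

lemma IsFibNbhdRetract.isEmbedding {e : Y → B0 × K} (he : IsFibNbhdRetract πY K e) :
    IsEmbedding e := by
  obtain ⟨O, -, heO, r, hr, -, hre⟩ := he.exists_retraction
  have hleft : Function.LeftInverse r (codRestrict e O fun y => heO (mem_range_self y)) :=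
    fun y => hre _ y rfl
  exact IsEmbedding.subtypeVal.comp (hleft.isEmbedding hr (he.continuous.codRestrict _))

end FibNbhdRetract

theorem IsFiberANR.exists_isFibNbhdRetract {B0 P : Type u} [TopologicalSpace B0]
    [MetrizableSpace B0] [TopologicalSpace P] {πP : P → B0} (hP : IsFiberANR B0 P πP) :
    ∃ (E : Type u) (_ : NormedAddCommGroup E) (_ : NormedSpace ℝ E) (K : Set E)
      (e : P → B0 × K), Convex ℝ K ∧ IsFibNbhdRetract πP K e := by
  obtain ⟨hPm, hπ, hretract⟩ := hP
  let := metrizableSpaceMetric P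
  rcases isEmpty_or_nonempty P with hPe | ⟨⟨x₀⟩⟩
  · exact ⟨P →ᵇ ℝ, _, _, ∅, isEmptyElim, convex_empty, isFibNbhdRetract_of_isEmpty πP ∅⟩
  set K := convexHull ℝ (range (kuratowskiBCF x₀))
  set e : P → B0 × K := fun x => (πP x, codRestrict (kuratowskiBCF x₀) K
    (fun x => subset_convexHull ℝ _ (mem_range_self x)) x)
  have he : IsClosedEmbedding e :=
    IsClosedEmbedding.prodMk_left hπ (isClosedEmbedding_kuratowskiBCF_convexHull x₀)
  obtain ⟨U, hU, r, hr, hr_range, hr_fst, hr_fix⟩ :=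
    hretract (B0 × K) inferInstance inferInstance Prod.fst continuous_fst e he fun _ => rfl
  obtain ⟨O, hO, heO, hOU⟩ := mem_nhdsSet_iff_exists.1 hU
  choose ρ hρ using fun z : O => hr_range (inclusion hOU z)
  refine ⟨_, _, _, K, e, convex_convexHull ℝ _, he.continuous, he.isClosed_range, fun _ => rfl,
    O, hO, heO, ρ, ?_, fun z => ?_, fun z y hzy => he.injective ?_⟩
  · exact he.isEmbedding.continuous_iff.2 <| by
      simpa only [Function.comp_def, hρ] using hr.comp (continuous_inclusion hOU)
  · exact (congrArg Prod.fst (hρ z)).trans (hr_fst _)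
  · rw [hρ, hr_fix _ (hzy ▸ mem_range_self y)]
    exact hzy

section StraightLineHomotopy

variable {E : Type u} [NormedAddCommGroup E] [NormedSpace ℝ E]

lemma exists_isOpen_prod_convex_subset {X : Type*} [TopologicalSpace X] {K : Set E}
    {O : Set (X × K)} (hO : IsOpen O) {z : X × K} (hz : z ∈ O) :
    ∃ U : Set X, ∃ V : Set E, IsOpen U ∧ IsOpen V ∧ Convex ℝ V ∧
      z ∈ U ×ˢ (Subtype.val ⁻¹' V) ∧ U ×ˢ (Subtype.val ⁻¹' V) ⊆ O := by
  obtain ⟨U, W, hU, hW, hzU, hzW, hUW⟩ := isOpen_prod_iff.1 hO _ _ hz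
  obtain ⟨W', hW', rfl⟩ := isOpen_induced_iff.1 hW
  obtain ⟨ε, hε, hball⟩ := Metric.isOpen_iff.1 hW' _ hzW
  exact ⟨U, Metric.ball z.2 ε, hU, Metric.isOpen_ball, convex_ball _ _,
    ⟨hzU, Metric.mem_ball_self hε⟩, (prod_mono_right (preimage_mono hball)).trans hUW⟩

theorem IsFibNbhdRetract.exists_openCover_fpHomotopic {B0 P : Type u} [TopologicalSpace B0]
    [TopologicalSpace P] {πP : P → B0} {K : Set E} {e : P → B0 × K} (hK : Convex ℝ K)
    (he : IsFibNbhdRetract πP K e) :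
    ∃ 𝒱 : Set (Set P), IsOpenCover 𝒱 ∧
      ∀ (Z : Type u) (_ : TopologicalSpace Z) (πZ : Z → B0) (f g : Z → P),
        IsFPMap πZ πP f → IsFPMap πZ πP g → UNear 𝒱 f g → FPHomotopic πZ πP f g := by
  obtain ⟨O, hO, heO, r, hr, hrπ, hre⟩ := he.exists_retraction
  refine ⟨{s | ∃ U : Set B0, ∃ V : Set E, IsOpen U ∧ IsOpen V ∧ Convex ℝ V ∧
    U ×ˢ (Subtype.val ⁻¹' V) ⊆ O ∧ s = e ⁻¹' (U ×ˢ (Subtype.val ⁻¹' V))}, ⟨?_, ?_⟩, ?_⟩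
  · rintro _ ⟨U, V, hU, hV, -, -, rfl⟩
    exact (hU.prod (hV.preimage continuous_subtype_val)).preimage he.continuous
  · refine eq_univ_of_forall fun y => ?_
    obtain ⟨U, V, hU, hV, hVc, hy, hUV⟩ :=
      exists_isOpen_prod_convex_subset hO (heO (mem_range_self y))
    exact ⟨_, ⟨U, V, hU, hV, hVc, hUV, rfl⟩, hy⟩
  intro Z _ πZ f g hf hg hfg
  let k : Z × I → E := fun zt =>
    (1 - (zt.2 : ℝ)) • ((e (f zt.1)).2 : E) + (zt.2 : ℝ) • ((e (g zt.1)).2 : E)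
  have hkK : ∀ zt, k zt ∈ K := fun zt =>
    hK (e _).2.2 (e _).2.2 (sub_nonneg.2 zt.2.2.2) zt.2.2.1 (sub_add_cancel 1 _)
  have hbase : ∀ z, (e (g z)).1 = (e (f z)).1 := fun z => by
    rw [he.fst_eq, he.fst_eq, hf.2, hg.2]
  have hkO : ∀ zt : Z × I, ((e (f zt.1)).1, (⟨k zt, hkK zt⟩ : K)) ∈ O := by
    rintro ⟨z, t⟩
    obtain ⟨_, ⟨U, V, -, -, hVc, hUV, rfl⟩, ⟨hfU, hfV⟩, ⟨-, hgV⟩⟩ := hfg z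
    exact hUV ⟨hfU, hVc hfV hgV (sub_nonneg.2 t.2.2) t.2.1 (sub_add_cancel 1 _)⟩
  refine ⟨fun zt => r ⟨_, hkO zt⟩, ?_, fun z => hre _ _ ?_, fun z => hre _ _ ?_,
    fun z t => (hrπ _).trans ((he.fst_eq _).trans (hf.2 z))⟩
  · have hkc : Continuous k := by
      have hec := he.continuous
      have hfc := hf.1
      have hgc := hg.1
      fun_prop
    exact hr.comp ((((he.continuous.comp hf.1).fst.comp continuous_fst).prodMk
      (hkc.subtype_mk hkK)).subtype_mk _)
  · exact Prod.ext rfl (Subtype.ext (by simp [k]))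
  · exact Prod.ext (hbase z).symm (Subtype.ext (by simp [k]))

end StraightLineHomotopy

section Dugundji

open Metric

variable {W E : Type*} [MetricSpace W] [NormedAddCommGroup E] [NormedSpace ℝ E] {A : Set W}

/-- At `y ∉ A` only values of `f` at points of `A` within `3 d(y, A)` of `y` are used; this is what
makes the extension continuous at the boundary of `A`. -/
lemma exists_continuousMap_compl_mem_convexHull (hA : IsClosed A) (hne : A.Nonempty) (f : A → E) :
    ∃ G : C(↥Aᶜ, E), ∀ y : ↥Aᶜ,
      G y ∈ convexHull ℝ (f '' {a | dist (a : W) y < 3 * infDist (y : W) A}) := by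
  refine exists_continuous_forall_mem_convex_of_local_const (fun _ => convex_convexHull ℝ _)
    fun y => ?_
  have hy : 0 < infDist (y : W) A := (hA.notMem_iff_infDist_pos hne).1 y.2
  obtain ⟨a, ha, hya⟩ := (infDist_lt_iff hne).1 (by linarith : infDist (y : W) A < 2 * _)
  have hnear : ∀ᶠ y' : ↥Aᶜ in 𝓝 y, dist a (y' : W) < 3 * infDist (y' : W) A :=
    (continuous_const.dist continuous_subtype_val).continuousAt.eventually_lt
      ((continuous_const.mul ((continuous_infDist_pt A).comp continuous_subtype_val)).continuousAt
        (f := fun y' : ↥Aᶜ => 3 * infDist (y' : W) A))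
      (by rw [dist_comm]; linarith)
  exact ⟨f ⟨a, ha⟩, hnear.mono fun y' hy' => subset_convexHull ℝ _ ⟨⟨a, ha⟩, hy', rfl⟩⟩

theorem IsClosed.exists_extension_mem_convexHull (hA : IsClosed A) (hne : A.Nonempty) {f : A → E}
    (hf : Continuous f) :
    ∃ g : W → E, Continuous g ∧ (∀ a : A, g a = f a) ∧ ∀ w, g w ∈ convexHull ℝ (range f) := by
  classical
  obtain ⟨G, hG⟩ := exists_continuousMap_compl_mem_convexHull hA hne f
  let g : W → E := fun w => if h : w ∈ A then f ⟨w, h⟩ else G ⟨w, h⟩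
  refine ⟨g, continuous_iff_continuousAt.2 fun w => ?_, fun a => dif_pos a.2, fun w => ?_⟩
  · by_cases hw : w ∈ A
    · rw [ContinuousAt, show g w = f ⟨w, hw⟩ from dif_pos hw, Metric.tendsto_nhds_nhds]
      intro ε hε
      obtain ⟨δ, hδ, hfδ⟩ := Metric.continuousAt_iff.1 hf.continuousAt ε hε
      refine ⟨δ / 4, by positivity, fun {y} hy => ?_⟩
      by_cases hyA : y ∈ A
      · simp only [g, dif_pos hyA]
        exact hfδ (show dist y w < δ by linarith)
      simp only [g, dif_neg hyA]
      have hyw : infDist y A ≤ dist y w := infDist_le_dist_of_mem hw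
      refine convexHull_min ?_ (convex_ball _ _) (hG ⟨y, hyA⟩)
      rintro _ ⟨a, ha, rfl⟩
      exact hfδ (show dist (a : W) w < δ by linarith [dist_triangle (a : W) y w, ha.out])
    · have hGA : ContinuousOn g Aᶜ := continuousOn_iff_continuous_domRestrict.2 <|
        G.continuous.congr fun y => (dif_neg (show (y : W) ∉ A from y.2) : g y = G y).symm
      exact hGA.continuousAt (hA.isOpen_compl.mem_nhds hw)
  · by_cases hw : w ∈ A
    · simp only [g, dif_pos hw]
      exact subset_convexHull ℝ _ (mem_range_self _)
    · simp only [g, dif_neg hw]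
      exact convexHull_mono (image_subset_range _ _) (hG _)

end Dugundji

section Transfer

variable {B0 Y E : Type u} [TopologicalSpace B0] [TopologicalSpace Y] [NormedAddCommGroup E]
  [NormedSpace ℝ E] {πY : Y → B0} {K : Set E} {e : Y → B0 × K}

lemma IsFibNbhdRetract.exists_extension [Nonempty Y] (hK : Convex ℝ K)
    (he : IsFibNbhdRetract πY K e) {W : Type u} [TopologicalSpace W] [MetrizableSpace W]
    {πW : W → B0} (hπW : Continuous πW) {j : Y → W} (hj : IsClosedEmbedding j)
    (hjπ : ∀ y, πW (j y) = πY y) :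
    ∃ Φ : W → B0 × K, Continuous Φ ∧ (∀ w, (Φ w).1 = πW w) ∧ ∀ y, Φ (j y) = e y := by
  let := metrizableSpaceMetric W
  let jinv := hj.isEmbedding.toHomeomorph.symm
  let φ : range j → E := fun w => (e (jinv w)).2
  obtain ⟨ψ, hψ, hψφ, hψK⟩ := hj.isClosed_range.exists_extension_mem_convexHull
    (range_nonempty j) (f := φ)
    (continuous_subtype_val.comp (continuous_snd.comp (he.continuous.comp jinv.continuous)))
  have hψK' : ∀ w, ψ w ∈ K := fun w =>
    convexHull_min (range_subset_iff.2 fun w => (e (jinv w)).2.2) hK (hψK w)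
  refine ⟨fun w => (πW w, ⟨ψ w, hψK' w⟩), hπW.prodMk (hψ.subtype_mk _), fun w => rfl,
    fun y => Prod.ext ((hjπ y).trans (he.fst_eq y).symm) (Subtype.ext ?_)⟩
  change ψ (j y) = _
  rw [hψφ ⟨j y, mem_range_self y⟩]
  exact congrArg (fun y => ((e y).2 : E)) (hj.isEmbedding.toHomeomorph.symm_apply_apply y)

theorem IsFibNbhdRetract.isFiberANR [MetrizableSpace B0] (hK : Convex ℝ K)
    (he : IsFibNbhdRetract πY K e) : IsFiberANR B0 Y πY := by
  refine ⟨he.isEmbedding.metrizableSpace, (continuous_fst.comp he.continuous).congr he.fst_eq,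
    fun W _ _ πW hπW j hj hjπ => ?_⟩
  rcases isEmpty_or_nonempty Y with hY | hY
  · refine ⟨∅, by rw [range_eq_empty j, nhdsSet_empty]; exact Filter.mem_bot, fun u => u.2.elim,
      continuous_of_discreteTopology, fun u => u.2.elim, fun u => u.2.elim, fun u => u.2.elim⟩
  obtain ⟨Φ, hΦ, hΦπ, hΦj⟩ := he.exists_extension hK hπW hj hjπ
  obtain ⟨O, hO, heO, r, hr, hrπ, hre⟩ := he.exists_retraction
  refine ⟨Φ ⁻¹' O, (hO.preimage hΦ).mem_nhdsSet.2 ?_, fun v => j (r ⟨Φ v, v.2⟩),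
    hj.continuous.comp (hr.comp ((hΦ.comp continuous_subtype_val).subtype_mk _)),
    fun v => mem_range_self _, fun v => by rw [hjπ, hrπ, hΦπ], ?_⟩
  · rintro _ ⟨y, rfl⟩
    rw [mem_preimage, hΦj]
    exact heO (mem_range_self y)
  · rintro v ⟨y, hy⟩
    change j (r _) = _
    rw [hre _ y (by rw [← hΦj, hy])]
    exact hy

end Transfer

lemma isOpen_setOf_forall_mem_of_compactSpace {X Y T : Type*} [TopologicalSpace X]
    [TopologicalSpace Y] [TopologicalSpace T] [CompactSpace T] {F : X × T → Y} (hF : Continuous F)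
    {O : Set Y} (hO : IsOpen O) : IsOpen {x | ∀ t, F (x, t) ∈ O} := by
  have hcompl : {x | ∀ t, F (x, t) ∈ O} = (Prod.fst '' (F ⁻¹' Oᶜ))ᶜ := by
    ext x
    simp
  rw [hcompl]
  exact (isClosedMap_fst_of_compactSpace _ (hO.isClosed_compl.preimage hF)).isOpen_compl

section FibPathSpace

variable {B0 P Z : Type u} [TopologicalSpace B0] [TopologicalSpace P] [TopologicalSpace Z]

abbrev FibPathSpace (πP : P → B0) : Type u := {γ : C(I, P) // ∀ t, πP (γ t) = πP (γ 0)}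

abbrev FibPathSpace.proj (πP : P → B0) (γ : FibPathSpace πP) : B0 := πP (γ.1 0)

variable {πP : P → B0} {πZ : Z → B0}

lemma FibPathSpace.isFPMap_eval (t : I) :
    IsFPMap (FibPathSpace.proj πP) πP fun γ : FibPathSpace πP => γ.1 t :=
  ⟨(continuous_eval_const t).comp continuous_subtype_val, fun γ => γ.2 t⟩

lemma FPHomotopic.exists_fibPath {f g : Z → P} (h : FPHomotopic πZ πP f g) :
    ∃ Γ : Z → FibPathSpace πP, IsFPMap πZ (FibPathSpace.proj πP) Γ ∧
      (∀ z, (Γ z).1 0 = f z) ∧ ∀ z, (Γ z).1 1 = g z := by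
  obtain ⟨H, hc, h0, h1, hπ⟩ := h
  let Hc : C(Z × I, P) := ⟨H, hc⟩
  exact ⟨fun z => ⟨Hc.curry z, fun t => (hπ z t).trans (hπ z 0).symm⟩,
    ⟨Hc.curry.continuous.subtype_mk _, fun z => hπ z 0⟩, h0, h1⟩

lemma fpHomotopic_eval_zero_eval_one {Γ : Z → FibPathSpace πP}
    (hΓ : IsFPMap πZ (FibPathSpace.proj πP) Γ) :
    FPHomotopic πZ πP (fun z => (Γ z).1 0) fun z => (Γ z).1 1 :=
  ⟨fun zt => (Γ zt.1).1 zt.2,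
    continuous_eval.comp ((continuous_subtype_val.comp hΓ.1).prodMap continuous_id),
    fun _ => rfl, fun _ => rfl, fun z t => ((Γ z).2 t).trans (hΓ.2 z)⟩

end FibPathSpace

section PathSet

variable {X E : Type*} [TopologicalSpace X] [TopologicalSpace E]

/-- `C(I, K)`, realised inside the vector space `C(I, E)` so that it is convex when `K` is. -/
def pathSet (K : Set E) : Set C(I, E) := {γ | ∀ t, γ t ∈ K}

lemma Convex.pathSet {E : Type*} [NormedAddCommGroup E] [NormedSpace ℝ E] {K : Set E}
    (hK : Convex ℝ K) : Convex ℝ (pathSet K) :=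
  fun _ hγ _ hδ _ _ ha hb hab t => hK (hγ t) (hδ t) ha hb hab

def pathSetEval {K : Set E} (z : X × pathSet K) (t : I) : X × K := (z.1, ⟨z.2.1 t, z.2.2 t⟩)

lemma continuous_pathSetEval {K : Set E} :
    Continuous fun zt : (X × pathSet K) × I => pathSetEval zt.1 zt.2 :=
  continuous_fst.fst.prodMk <| (continuous_eval.comp
    ((continuous_subtype_val.comp continuous_fst.snd).prodMk continuous_snd)).subtype_mk _

end PathSet

section FibPathMap

variable {B0 P E : Type u} [TopologicalSpace B0] [TopologicalSpace P] [TopologicalSpace E]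
  {πP : P → B0} {K : Set E} {e : P → B0 × K}

def fibPathMap (he : Continuous e) (γ : FibPathSpace πP) : B0 × pathSet K :=
  (πP (γ.1 0), ⟨(⟨fun y => ((e y).2 : E), continuous_subtype_val.comp (continuous_snd.comp he)⟩ :
    C(P, E)).comp γ.1, fun t => (e (γ.1 t)).2.2⟩)

lemma IsFibNbhdRetract.pathSetEval_fibPathMap (he : IsFibNbhdRetract πP K e)
    (γ : FibPathSpace πP) (t : I) : pathSetEval (fibPathMap he.continuous γ) t = e (γ.1 t) :=
  Prod.ext ((γ.2 t).symm.trans (he.fst_eq _).symm) rfl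

lemma IsFibNbhdRetract.range_fibPathMap (he : IsFibNbhdRetract πP K e) :
    range (fibPathMap (πP := πP) he.continuous) = {z | ∀ t, pathSetEval z t ∈ range e} := by
  refine Subset.antisymm ?_ fun z hz => ?_
  · rintro _ ⟨γ, rfl⟩ t
    exact ⟨γ.1 t, (he.pathSetEval_fibPathMap γ t).symm⟩
  choose γ hγ using hz
  have hγc : Continuous γ := he.isEmbedding.continuous_iff.2 <| by
    simpa only [Function.comp_def, hγ, id] using
      continuous_pathSetEval.comp (continuous_const.prodMk continuous_id)
  have hγπ : ∀ t, πP (γ t) = z.1 := fun t => (he.fst_eq _).symm.trans (congrArg Prod.fst (hγ t))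
  refine ⟨⟨⟨γ, hγc⟩, fun t => (hγπ t).trans (hγπ 0).symm⟩, Prod.ext (hγπ 0) ?_⟩
  exact Subtype.ext (ContinuousMap.ext fun t => congrArg (fun w => (w.2 : E)) (hγ t))

theorem IsFibNbhdRetract.fibPathSpace (he : IsFibNbhdRetract πP K e) :
    IsFibNbhdRetract (FibPathSpace.proj πP) (pathSet K) (fibPathMap he.continuous) where
  continuous := ((continuous_fst.comp he.continuous).congr he.fst_eq).comp
      ((continuous_eval_const 0).comp continuous_subtype_val) |>.prodMk
    ((ContinuousMap.continuous_postcomp _).comp continuous_subtype_val |>.subtype_mk _)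
  isClosed_range := by
    rw [he.range_fibPathMap, ofPred_forall]
    exact isClosed_iInter fun t => he.isClosed_range.preimage
      (continuous_pathSetEval.comp (continuous_id.prodMk continuous_const))
  fst_eq _ := rfl
  exists_retraction := by
    obtain ⟨O, hO, heO, r, hr, hrπ, hre⟩ := he.exists_retraction
    let R : C({z : B0 × pathSet K | ∀ t, pathSetEval z t ∈ O} × I, P) :=
      ⟨fun zt => r ⟨pathSetEval zt.1.1 zt.2, zt.1.2 zt.2⟩, hr.comp <|
        (continuous_pathSetEval.comp (continuous_subtype_val.prodMap continuous_id)).subtype_mk _⟩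
    refine ⟨_, isOpen_setOf_forall_mem_of_compactSpace continuous_pathSetEval hO, ?_,
      fun z => ⟨R.curry z, fun t => (hrπ _).trans (hrπ ⟨pathSetEval z.1 0, z.2 0⟩).symm⟩,
      R.curry.continuous.subtype_mk _, fun z => hrπ _, fun z γ hzγ => ?_⟩
    · rw [he.range_fibPathMap]
      exact fun z hz t => heO (hz t)
    · refine Subtype.ext (ContinuousMap.ext fun t => hre _ _ ?_)
      change pathSetEval z.1 t = e (γ.1 t)
      rw [hzγ, he.pathSetEval_fibPathMap]

end FibPathMap

theorem IsFiberANR.fibPathSpace {B0 P : Type u} [TopologicalSpace B0] [MetrizableSpace B0]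
    [TopologicalSpace P] {πP : P → B0} (hP : IsFiberANR B0 P πP) :
    IsFiberANR B0 (FibPathSpace πP) (FibPathSpace.proj πP) := by
  obtain ⟨E, _, _, K, e, hK, he⟩ := hP.exists_isFibNbhdRetract
  exact he.fibPathSpace.isFiberANR hK.pathSet

lemma FibMapToSys.isFPMap {B0 X : Type u} [TopologicalSpace B0] [TopologicalSpace X]
    {πX : X → B0} {S : FibInvSys B0} (p : FibMapToSys X πX S) (a : S.Idx) :
    IsFPMap πX (S.proj a) (p.maps a) :=
  ⟨p.cont a, p.fp a⟩

namespace FibInvSys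

variable {B0 : Type u} [TopologicalSpace B0] (S : FibInvSys B0)

lemma isFPMap_bond {a a' : S.Idx} (h : S.le a a') :
    IsFPMap (S.proj a') (S.proj a) (S.bond a a' h) :=
  ⟨S.bond_cont a a' h, S.bond_fp a a' h⟩

variable {P : Type u} [TopologicalSpace P] (πP : P → B0)

def EventuallyFPHomotopic {a : S.Idx} (f g : S.obj a → P) : Prop :=
  ∃ (a' : S.Idx) (h : S.le a a'),
    FPHomotopic (S.proj a') πP (fun y => f (S.bond a a' h y)) fun y => g (S.bond a a' h y)

variable {S πP}

lemma fpHomotopic_comp_bond {a a₁ a₂ : S.Idx} {f g : S.obj a → P} (h₁ : S.le a a₁)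
    (h₂ : S.le a₁ a₂)
    (hfg : FPHomotopic (S.proj a₁) πP (fun y => f (S.bond a a₁ h₁ y))
      fun y => g (S.bond a a₁ h₁ y)) :
    FPHomotopic (S.proj a₂) πP (fun y => f (S.bond a a₂ (S.le_trans _ _ _ h₁ h₂) y))
      fun y => g (S.bond a a₂ (S.le_trans _ _ _ h₁ h₂) y) := by
  simpa only [S.bond_comp] using hfg.comp (S.isFPMap_bond h₂)

lemma eventuallyFPHomotopic_of_fpHomotopic {a : S.Idx} {f g : S.obj a → P}
    (h : FPHomotopic (S.proj a) πP f g) : S.EventuallyFPHomotopic πP f g :=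
  ⟨a, S.le_refl a, by simpa only [S.bond_id] using h⟩

lemma EventuallyFPHomotopic.symm {a : S.Idx} {f g : S.obj a → P}
    (h : S.EventuallyFPHomotopic πP f g) : S.EventuallyFPHomotopic πP g f :=
  let ⟨a', h', H⟩ := h; ⟨a', h', H.symm⟩

lemma EventuallyFPHomotopic.trans {a : S.Idx} {f g k : S.obj a → P}
    (h₁ : S.EventuallyFPHomotopic πP f g) (h₂ : S.EventuallyFPHomotopic πP g k) :
    S.EventuallyFPHomotopic πP f k := by
  obtain ⟨a₁, ha₁, hfg⟩ := h₁
  obtain ⟨a₂, ha₂, hgk⟩ := h₂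
  obtain ⟨a₃, h₁₃, h₂₃⟩ := S.directed a₁ a₂
  exact ⟨a₃, _, (fpHomotopic_comp_bond ha₁ h₁₃ hfg).trans (fpHomotopic_comp_bond ha₂ h₂₃ hgk)⟩

lemma EventuallyFPHomotopic.of_comp_bond {a b : S.Idx} (hab : S.le a b) {f g : S.obj a → P}
    (h : S.EventuallyFPHomotopic πP (fun y => f (S.bond a b hab y)) fun y => g (S.bond a b hab y)) :
    S.EventuallyFPHomotopic πP f g := by
  obtain ⟨c, hbc, H⟩ := h
  exact ⟨c, S.le_trans _ _ _ hab hbc, by simpa only [S.bond_comp] using H⟩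

end FibInvSys

theorem IsFiberANR.exists_openCover_fpHomotopic {B0 P : Type u} [TopologicalSpace B0]
    [MetrizableSpace B0] [TopologicalSpace P] {πP : P → B0} (hP : IsFiberANR B0 P πP) :
    ∃ 𝒱 : Set (Set P), IsOpenCover 𝒱 ∧
      ∀ (Z : Type u) (_ : TopologicalSpace Z) (πZ : Z → B0) (f g : Z → P),
        IsFPMap πZ πP f → IsFPMap πZ πP g → UNear 𝒱 f g → FPHomotopic πZ πP f g := by
  obtain ⟨E, _, _, K, e, hK, he⟩ := hP.exists_isFibNbhdRetract
  exact he.exists_openCover_fpHomotopic hK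

section PullbackCover

variable {Q P : Type u} (u v : Q → P) (𝒱 : Set (Set P))

def pullbackCover₂ : Set (Set Q) := {s | ∃ V₀ ∈ 𝒱, ∃ V₁ ∈ 𝒱, s = u ⁻¹' V₀ ∩ v ⁻¹' V₁}

variable {u v 𝒱}

lemma IsOpenCover.pullbackCover₂ [TopologicalSpace Q] [TopologicalSpace P] (h𝒱 : IsOpenCover 𝒱)
    (hu : Continuous u) (hv : Continuous v) : IsOpenCover (pullbackCover₂ u v 𝒱) := by
  refine ⟨?_, sUnion_eq_univ_iff.2 fun q => ?_⟩
  · rintro _ ⟨V₀, hV₀, V₁, hV₁, rfl⟩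
    exact ((h𝒱.1 V₀ hV₀).preimage hu).inter ((h𝒱.1 V₁ hV₁).preimage hv)
  obtain ⟨V₀, hV₀, hq₀⟩ := sUnion_eq_univ_iff.1 h𝒱.2 (u q)
  obtain ⟨V₁, hV₁, hq₁⟩ := sUnion_eq_univ_iff.1 h𝒱.2 (v q)
  exact ⟨_, ⟨V₀, hV₀, V₁, hV₁, rfl⟩, hq₀, hq₁⟩

lemma UNear.of_pullbackCover₂ {X : Type u} {F G : X → Q} (h : UNear (pullbackCover₂ u v 𝒱) F G) :
    UNear 𝒱 (fun x => u (F x)) (fun x => u (G x)) ∧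
      UNear 𝒱 (fun x => v (F x)) (fun x => v (G x)) := by
  refine ⟨fun x => ?_, fun x => ?_⟩ <;> obtain ⟨_, ⟨V₀, hV₀, V₁, hV₁, rfl⟩, hF, hG⟩ := h x
  exacts [⟨V₀, hV₀, hF.1, hG.1⟩, ⟨V₁, hV₁, hF.2, hG.2⟩]

end PullbackCover

section Resolution

variable {B0 : Type u} [TopologicalSpace B0] [MetrizableSpace B0] {X : Type u} [TopologicalSpace X]
  {πX : X → B0} {S : FibInvSys B0} {p : FibMapToSys X πX S}

theorem CondR2.exists_openCover_eventuallyFPHomotopic (hR2 : CondR2 X πX S p) {P : Type u}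
    [TopologicalSpace P] {πP : P → B0} (hP : IsFiberANR B0 P πP) :
    ∃ 𝒱 : Set (Set P), IsOpenCover 𝒱 ∧
      ∀ (a : S.Idx) (f g : S.obj a → P), IsFPMap (S.proj a) πP f → IsFPMap (S.proj a) πP g →
        UNear 𝒱 (fun x => f (p.maps a x)) (fun x => g (p.maps a x)) →
        S.EventuallyFPHomotopic πP f g := by
  obtain ⟨𝒱₀, h𝒱₀, hhom⟩ := hP.exists_openCover_fpHomotopic
  obtain ⟨𝒱, h𝒱, hR⟩ := hR2 P _ πP hP 𝒱₀ h𝒱₀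
  refine ⟨𝒱, h𝒱, fun a f g hf hg hfg => ?_⟩
  obtain ⟨a', h, hnear⟩ := hR a f g hf hg hfg
  exact ⟨a', h, hhom _ _ _ _ _ (hf.comp (S.isFPMap_bond h)) (hg.comp (S.isFPMap_bond h)) hnear⟩

theorem CondR1.condE1 (hR1 : CondR1 X πX S p) : CondE1 X πX S p := by
  intro P _ πP hP f hf
  obtain ⟨𝒱, h𝒱, hhom⟩ := hP.exists_openCover_fpHomotopic
  obtain ⟨a, h, hh, hnear⟩ := hR1 P _ πP hP 𝒱 h𝒱 f hf
  exact ⟨a, h, hh, hhom X _ πX _ f (hh.comp (p.isFPMap a)) hf hnear.symm⟩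

theorem IsFibResolution.condE2 (hres : IsFibResolution X πX S p) : CondE2 X πX S p := by
  intro P _ πP hP a f f' hf hf' hff'
  obtain ⟨𝒱, h𝒱, hR2⟩ := hres.2.exists_openCover_eventuallyFPHomotopic hP
  obtain ⟨Γ, hΓ, hΓ0, hΓ1⟩ := hff'.exists_fibPath
  have hev := FibPathSpace.isFPMap_eval (πP := πP)
  obtain ⟨a₁, G, hG, hΓG⟩ := hres.1 _ _ _ hP.fibPathSpace _
    (h𝒱.pullbackCover₂ (hev 0).1 (hev 1).1) Γ hΓ
  obtain ⟨hnear₀, hnear₁⟩ := hΓG.of_pullbackCover₂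
  obtain ⟨a₂, ha, ha₁⟩ := S.directed a a₁
  have hG₂ := hG.comp (S.isFPMap_bond ha₁)
  have h₀ : S.EventuallyFPHomotopic πP (fun y => f (S.bond a a₂ ha y))
      fun y => (G (S.bond a₁ a₂ ha₁ y)).1 0 :=
    hR2 a₂ _ _ (hf.comp (S.isFPMap_bond ha)) ((hev 0).comp hG₂)
      (by simpa only [p.comm, hΓ0] using hnear₀)
  have h₁ : S.EventuallyFPHomotopic πP (fun y => f' (S.bond a a₂ ha y))
      fun y => (G (S.bond a₁ a₂ ha₁ y)).1 1 :=
    hR2 a₂ _ _ (hf'.comp (S.isFPMap_bond ha)) ((hev 1).comp hG₂)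
      (by simpa only [p.comm, hΓ1] using hnear₁)
  have h₀₁ := FibInvSys.eventuallyFPHomotopic_of_fpHomotopic (fpHomotopic_eval_zero_eval_one hG₂)
  exact (h₀.trans (h₀₁.trans h₁.symm)).of_comp_bond ha

end Resolution

theorem fibANRResolution_isExpansion_general (B0 : Type u) [TopologicalSpace B0] [MetrizableSpace B0]
    (X : Type u) [TopologicalSpace X] (πX : X → B0)
    (S : FibInvSys B0) (p : FibMapToSys X πX S)
    (hres : IsFibResolution X πX S p) :
    CondE1 X πX S p ∧ CondE2 X πX S p :=
  ⟨hres.1.condE1, hres.condE2⟩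

/-- Corollary 1.6: every `ANR_{B0}`-resolution over `B0` is an `ANR_{B0}`-expansion, i.e. it
satisfies conditions (E1) and (E2). -/
theorem fibANRResolution_isExpansion (B0 : Type u) [TopologicalSpace B0] [MetrizableSpace B0]
    (X : Type u) [TopologicalSpace X] (πX : X → B0) (hπX : Continuous πX)
    (S : FibInvSys B0) (p : FibMapToSys X πX S)
    (hANR : ∀ a : S.Idx, IsFiberANR B0 (S.obj a) (S.proj a))
    (hres : IsFibResolution X πX S p) :
    CondE1 X πX S p ∧ CondE2 X πX S p :=
  fibANRResolution_isExpansion_general B0 X πX S p hres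
end

section
/- Let f : X → Y be an f.p. map from a topological space X over B0 to an ANR_{B0}-space Y. Then there exist an ANR_{B0}-space Z of weight w(Z) ≤ max{w(X), w(B0), ℵ0} and f.p. maps g : X → Z and h : Z → Y such that h ∘ g = f. -/
open Set Topology TopologicalSpace unitInterval

universe u

/-!
Embed `Y` isometrically into the Banach space `E` of bounded continuous functions on `Y` by
`k y = d(y, ·) - d(y₀, ·)`. The image is closed in its convex hull `H`, so `y ↦ (k y, πY y)` is a
closed f.p. embedding of `Y` into `H × B0`, and the `ANR_{B0}` property gives an f.p. retraction
`ρ` of an open neighbourhood `V` of the image onto `Y`. Take `T ⊆ X` dense with `|T| ≤ w(X)` and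
let `C` be the intersection of `H` with the closed linear span of `k (f T)`; it is convex, contains
`k (f X)`, and has a dense subset of size `≤ max (w(X), ℵ₀)`. Then `Z = V ∩ (C × B0)` is open in
`C × B0`, hence an `ANR_{B0}` by Dugundji's extension theorem, has the required weight, and `f`
factors as `x ↦ (k (f x), πX x)` followed by `ρ`.
-/

open Metric Filter BoundedContinuousFunction Cardinal

section Dugundji

variable {M : Type*} [MetricSpace M] {A : Set M}

lemma exists_mem_eventually_dist_lt_two_mul_infDist (hA : IsClosed A) (hne : A.Nonempty) {z : M}
    (hz : z ∉ A) : ∃ a ∈ A, ∀ᶠ y in 𝓝 z, dist y a < 2 * infDist y A := by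
  have hpos : 0 < infDist z A := (hA.notMem_iff_infDist_pos hne).1 hz
  obtain ⟨a, ha, hza⟩ := (infDist_lt_iff hne).1 (by linarith : infDist z A < 2 * infDist z A)
  have hopen : IsOpen {y : M | dist y a < 2 * infDist y A} :=
    isOpen_lt (by fun_prop) (continuous_const.mul (continuous_infDist_pt A))
  exact ⟨a, ha, hopen.mem_nhds hza⟩

lemma dist_lt_three_mul_of_dist_lt_two_mul_infDist {m z a : M} (hm : m ∈ A)
    (ha : dist z a < 2 * infDist z A) : dist a m < 3 * dist z m := by
  have := infDist_le_dist_of_mem (x := z) hm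
  have := dist_triangle a z m
  rw [dist_comm] at ha
  linarith

variable {E : Type*} [NormedAddCommGroup E] [NormedSpace ℝ E]

lemma continuousAt_of_mem_convexHull_image {f : A → E} (hf : Continuous f) {F : M → E}
    (hFA : ∀ a : A, F a = f a)
    (hF : ∀ z ∉ A, F z ∈ convexHull ℝ (f '' {a : A | dist z a < 2 * infDist z A}))
    {m : M} (hm : m ∈ A) : ContinuousAt F m := by
  refine Metric.continuousAt_iff.2 fun ε hε => ?_
  obtain ⟨δ, hδ, hfδ⟩ := Metric.continuousAt_iff.1 (hf.continuousAt (x := ⟨m, hm⟩)) ε hε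
  refine ⟨δ / 3, by positivity, fun {z} hz => ?_⟩
  rw [hFA ⟨m, hm⟩, ← mem_ball]
  by_cases hzA : z ∈ A
  · exact hFA ⟨z, hzA⟩ ▸ hfδ (x := ⟨z, hzA⟩) (by change dist z m < δ; linarith)
  refine convexHull_min (t := ball (f ⟨m, hm⟩) ε)
    (image_subset_iff.2 fun a ha => hfδ (x := a) ?_) (convex_ball _ _) (hF z hzA)
  have := dist_lt_three_mul_of_dist_lt_two_mul_infDist hm ha
  change dist (a : M) m < δ
  linarith

/-- Dugundji's extension theorem. -/
theorem Convex.exists_continuous_extension {C : Set E} (hC : Convex ℝ C) (hA : IsClosed A)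
    (hne : A.Nonempty) (f : A → E) (hf : Continuous f) (hfC : ∀ a, f a ∈ C) :
    ∃ F : M → E, Continuous F ∧ (∀ a : A, F a = f a) ∧ ∀ m, F m ∈ C := by
  classical
  set t : (Aᶜ : Set M) → Set E := fun z =>
    convexHull ℝ (f '' {a : A | dist (z : M) a < 2 * infDist (z : M) A})
  obtain ⟨G, hG⟩ := exists_continuous_forall_mem_convex_of_local_const (t := t)
    (fun _ => convex_convexHull ℝ _) fun z => by
      obtain ⟨a, ha, hza⟩ := exists_mem_eventually_dist_lt_two_mul_infDist hA hne z.2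
      exact ⟨f ⟨a, ha⟩, (continuous_subtype_val.tendsto z).eventually hza |>.mono
        fun y hy => subset_convexHull ℝ _ ⟨⟨a, ha⟩, hy, rfl⟩⟩
  set F : M → E := fun m => if h : m ∈ A then f ⟨m, h⟩ else G ⟨m, h⟩
  have hFA : ∀ a : A, F a = f a := fun a => dif_pos a.2
  have hFG : ∀ z : (Aᶜ : Set M), F z = G z := fun z => dif_neg z.2
  refine ⟨F, continuous_iff_continuousAt.2 fun m => ?_, hFA, fun m => ?_⟩
  · by_cases hm : m ∈ A
    · refine continuousAt_of_mem_convexHull_image hf hFA (fun z hz => ?_) hm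
      rw [hFG ⟨z, hz⟩]
      exact hG ⟨z, hz⟩
    have hcont : ContinuousAt (F ∘ Subtype.val) (⟨m, hm⟩ : (Aᶜ : Set M)) :=
      (funext hFG : F ∘ Subtype.val = G) ▸ G.continuous.continuousAt
    exact hA.isOpen_compl.isOpenEmbedding_subtypeVal.continuousAt_iff.1 hcont
  · by_cases hm : m ∈ A
    · exact hFA ⟨m, hm⟩ ▸ hfC _
    · exact hFG ⟨m, hm⟩ ▸ convexHull_min (image_subset_iff.2 fun a _ => hfC a) hC (hG _)

end Dugundji

section Kuratowski

variable {Y : Type*} [MetricSpace Y]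

noncomputable def kuratowskiMap (y₀ y : Y) : Y →ᵇ ℝ :=
  BoundedContinuousFunction.mkOfBound ⟨fun z => dist y z - dist y₀ z, by fun_prop⟩
    (2 * dist y y₀) fun x x' => by
      have h1 := abs_dist_sub_le y y₀ x
      have h2 := abs_dist_sub_le y y₀ x'
      rw [Real.dist_eq]
      simp only [ContinuousMap.coe_mk]
      rw [abs_sub_le_iff] at h1 h2 ⊢
      constructor <;> linarith

@[simp]
lemma kuratowskiMap_apply (y₀ y z : Y) : kuratowskiMap y₀ y z = dist y z - dist y₀ z := rfl

lemma isometry_kuratowskiMap (y₀ : Y) : Isometry (kuratowskiMap y₀) := by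
  refine Isometry.of_dist_eq fun y y' => le_antisymm ?_ ?_
  · refine (BoundedContinuousFunction.dist_le dist_nonneg).2 fun z => ?_
    rw [kuratowskiMap_apply, kuratowskiMap_apply, Real.dist_eq, sub_sub_sub_cancel_right]
    exact abs_dist_sub_le y y' z
  · simpa using dist_coe_le_dist (f := kuratowskiMap y₀ y) (g := kuratowskiMap y₀ y') y'

/-- For `φ = ∑ wᵢ • kuratowskiMap y₀ vᵢ`, evaluating at `x` gives
`dist (kuratowskiMap y₀ x) φ ≥ ∑ wᵢ * dist vᵢ x`. -/
lemma exists_pos_mul_dist_le_dist_kuratowskiMap {y₀ : Y} {φ : Y →ᵇ ℝ}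
    (hφ : φ ∈ convexHull ℝ (range (kuratowskiMap y₀))) :
    ∃ y : Y, ∃ c > 0, ∀ x, c * dist y x ≤ dist (kuratowskiMap y₀ x) φ := by
  obtain ⟨ι, _, w, z, hw₀, hw₁, hz, rfl⟩ := mem_convexHull_iff_exists_fintype.1 hφ
  choose v hv using hz
  obtain ⟨i₀, hi₀⟩ : ∃ i, 0 < w i := by
    by_contra! h
    have : ∑ i, w i ≤ 0 := Finset.sum_nonpos fun i _ => h i
    linarith
  refine ⟨v i₀, w i₀, hi₀, fun x => ?_⟩
  have heval : (∑ i, w i • z i) x - kuratowskiMap y₀ x x = ∑ i, w i * dist (v i) x := by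
    simp only [BoundedContinuousFunction.coe_sum, Finset.sum_apply,
      BoundedContinuousFunction.smul_apply, ← hv, kuratowskiMap_apply, smul_eq_mul, mul_sub,
      Finset.sum_sub_distrib, ← Finset.sum_mul, hw₁, dist_self]
    ring
  calc w i₀ * dist (v i₀) x ≤ ∑ i, w i * dist (v i) x :=
        Finset.single_le_sum (fun i _ => mul_nonneg (hw₀ i) dist_nonneg) (Finset.mem_univ i₀)
    _ ≤ dist (kuratowskiMap y₀ x x) ((∑ i, w i • z i) x) := by
        rw [Real.dist_eq, abs_sub_comm, heval]; exact le_abs_self _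
    _ ≤ _ := dist_coe_le_dist x

lemma isClosedEmbedding_kuratowskiMap_convexHull (y₀ : Y) :
    IsClosedEmbedding ((convexHull ℝ (range (kuratowskiMap y₀))).codRestrict (kuratowskiMap y₀)
      fun y => subset_convexHull ℝ _ (mem_range_self y)) := by
  set k := kuratowskiMap y₀
  set j := (convexHull ℝ (range k)).codRestrict k fun y => subset_convexHull ℝ _ (mem_range_self y)
  have hj : IsEmbedding j := (isometry_kuratowskiMap y₀).isEmbedding.codRestrict _ _
  refine ⟨hj, IsSeqClosed.isClosed fun u φ hu hlim => ?_⟩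
  choose x hx using hu
  obtain ⟨y, c, hc, hcy⟩ := exists_pos_mul_dist_le_dist_kuratowskiMap φ.2
  have hkx : Tendsto (fun n => k (x n)) atTop (𝓝 (φ : Y →ᵇ ℝ)) :=
    ((continuous_subtype_val.tendsto φ).comp hlim).congr fun n =>
      congrArg Subtype.val (hx n).symm
  have hxy : Tendsto x atTop (𝓝 y) := by
    refine tendsto_iff_dist_tendsto_zero.2 (squeeze_zero (fun _ => dist_nonneg) (fun n => ?_)
      (by simpa using (tendsto_iff_dist_tendsto_zero.1 hkx).const_mul c⁻¹))
    rw [dist_comm, le_inv_mul_iff₀ hc]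
    exact hcy (x n)
  refine ⟨y, tendsto_nhds_unique ((hj.continuous.tendsto y).comp hxy) ?_⟩
  exact hlim.congr fun n => (hx n).symm

end Kuratowski

lemma isClosedEmbedding_graph {X B : Type*} [TopologicalSpace X] [TopologicalSpace B] [T2Space B]
    {π : X → B} (hπ : Continuous π) : IsClosedEmbedding fun x => (x, π x) := by
  refine ⟨isEmbedding_graph hπ, ?_⟩
  convert isClosed_eq (hπ.comp continuous_fst) continuous_snd using 1
  ext ⟨x, b⟩
  simp [eq_comm]

lemma Topology.IsClosedEmbedding.prodMk_of_continuous {X Y B : Type*} [TopologicalSpace X]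
    [TopologicalSpace Y] [TopologicalSpace B] [T2Space B] {j : X → Y} (hj : IsClosedEmbedding j)
    {π : X → B} (hπ : Continuous π) : IsClosedEmbedding fun x => (j x, π x) :=
  (hj.prodMap .id).comp (isClosedEmbedding_graph hπ)

section Weight

lemma tweight_le_mk_of_isTopologicalBasis {W : Type u} [TopologicalSpace W] {B : Set (Set W)}
    (hB : IsTopologicalBasis B) : tweight W ≤ #B :=
  csInf_le' ⟨B, hB, rfl⟩

lemma exists_dense_mk_le_tweight (W : Type u) [TopologicalSpace W] :
    ∃ D : Set W, Dense D ∧ #D ≤ tweight W := by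
  obtain ⟨B, hB, hBw⟩ : ∃ B : Set (Set W), IsTopologicalBasis B ∧ #B = tweight W :=
    csInf_mem (s := {c | ∃ B : Set (Set W), IsTopologicalBasis B ∧ #B = c})
      ⟨_, _, isTopologicalBasis_opens, rfl⟩
  let pick : {b | b ∈ B ∧ b.Nonempty} → W := fun b => b.2.2.some
  refine ⟨range pick, hB.dense_iff.2 fun b hb hne => ⟨pick ⟨b, hb, hne⟩, hne.some_mem, ?_⟩, ?_⟩
  · exact mem_range_self _
  · calc #(range pick) ≤ #{b | b ∈ B ∧ b.Nonempty} := mk_range_le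
      _ ≤ #B := mk_le_mk_of_subset fun b hb => hb.1
      _ = tweight W := hBw

lemma tweight_le_of_isInducing {Z W : Type u} [TopologicalSpace Z] [PseudoMetricSpace W]
    {e : Z → W} (he : IsInducing e) {D : Set W} (hD : range e ⊆ closure D) :
    tweight Z ≤ max #D ℵ₀ := by
  set B := range fun p : D × ℚ => e ⁻¹' ball (p.1 : W) p.2
  have hB : IsTopologicalBasis B := by
    refine isTopologicalBasis_of_isOpen_of_nhds ?_ fun z u hzu hu => ?_
    · rintro _ ⟨p, rfl⟩
      exact isOpen_ball.preimage he.continuous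
    obtain ⟨V, hV, rfl⟩ := he.isOpen_iff.1 hu
    obtain ⟨ε, hε, hball⟩ := Metric.isOpen_iff.1 hV (e z) hzu
    obtain ⟨q, hq0, hq⟩ := exists_rat_btwn (half_pos hε)
    obtain ⟨d, hdD, hd⟩ :=
      Metric.mem_closure_iff.1 (hD (mem_range_self z)) q (by exact_mod_cast hq0)
    refine ⟨_, ⟨(⟨d, hdD⟩, q), rfl⟩, hd, fun z' (hz' : dist (e z') d < q) => hball ?_⟩
    have := dist_triangle (e z') d (e z)
    rw [dist_comm d] at this
    rw [mem_ball]
    linarith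
  calc tweight Z ≤ #B := tweight_le_mk_of_isTopologicalBasis hB
    _ ≤ #(D × ℚ) := mk_range_le
    _ ≤ max #D ℵ₀ := by simpa using mul_le_max #D ℵ₀


lemma tweight_le_one_of_isEmpty (W : Type u) [TopologicalSpace W] [IsEmpty W] : tweight W ≤ 1 :=
  (tweight_le_mk_of_isTopologicalBasis isTopologicalBasis_opens).trans <|
    (mk_set_le _).trans (by simp)

lemma exists_closure_span_subset_closure_mk_le {E : Type u} [NormedAddCommGroup E]
    [NormedSpace ℝ E] (S : Set E) :
    ∃ D : Set E, closure (Submodule.span ℝ S : Set E) ⊆ closure D ∧ #D ≤ max #S ℵ₀ := by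
  let comb : List (ℚ × S) → E := fun l => (l.map fun p => (p.1 : ℝ) • (p.2 : E)).sum
  refine ⟨range comb, closure_minimal (fun x hx => ?_) isClosed_closure, ?_⟩
  · obtain ⟨n, c, s, rfl⟩ := Submodule.mem_span_set'.1 hx
    have hw : Continuous fun c : Fin n → ℝ => ∑ j, c j • (s j : E) := by fun_prop
    have hdense : DenseRange fun (q : Fin n → ℚ) j => (q j : ℝ) :=
      DenseRange.piMap fun _ => Rat.denseRange_cast
    refine closure_mono ?_ (hw.range_subset_closure_image_dense hdense ⟨c, rfl⟩)
    rintro _ ⟨_, ⟨q, rfl⟩, rfl⟩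
    exact ⟨List.ofFn fun j => (q j, s j), by simp [comb, List.sum_ofFn]⟩
  · calc #(range comb) ≤ #(List (ℚ × S)) := mk_range_le
      _ ≤ max ℵ₀ #(ℚ × S) := mk_list_le_max _
      _ ≤ max #S ℵ₀ := by
        rw [max_comm, mk_prod, mk_eq_aleph0 ℚ, lift_aleph0, lift_uzero]
        refine max_le ((mul_le_max _ _).trans_eq ?_) (le_max_right _ _)
        rw [max_comm ℵ₀, max_assoc, max_self]

end Weight

section FiberANR

variable {B0 : Type u} [TopologicalSpace B0]

lemma IsFiberANR.exists_retraction {Y : Type u} [TopologicalSpace Y] {πY : Y → B0}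
    (hY : IsFiberANR B0 Y πY) {P : Type u} [TopologicalSpace P] [MetrizableSpace P]
    {πP : P → B0} (hπP : Continuous πP) {i : Y → P} (hi : IsClosedEmbedding i)
    (hfp : ∀ y, πP (i y) = πY y) :
    ∃ O : Set P, IsOpen O ∧ range i ⊆ O ∧ ∃ ρ : O → Y, Continuous ρ ∧
      (∀ p, πY (ρ p) = πP p) ∧ ∀ y (hy : i y ∈ O), ρ ⟨i y, hy⟩ = y := by
  obtain ⟨U, hU, r, hr, hr_mem, hr_fp, hr_fix⟩ :=
    hY.2.2 P inferInstance inferInstance πP hπP i hi hfp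
  obtain ⟨O, hO, hiO, hOU⟩ := mem_nhdsSet_iff_exists.1 hU
  set e := hi.isEmbedding.toHomeomorph
  refine ⟨O, hO, hiO, fun p => e.symm ⟨r ⟨p, hOU p.2⟩, hr_mem _⟩, ?_, fun p => ?_, fun y hy => ?_⟩
  · exact e.symm.continuous.comp ((hr.comp (continuous_inclusion hOU)).codRestrict _)
  · rw [← hfp, ← hr_fp ⟨p, hOU p.2⟩]
    exact congrArg πP (congrArg Subtype.val (e.apply_symm_apply _))
  · refine e.symm_apply_eq.2 (Subtype.ext ?_)
    exact hr_fix ⟨i y, hOU hy⟩ (mem_range_self y)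

theorem Convex.isFiberANR_of_isOpen [MetrizableSpace B0] {E : Type u} [NormedAddCommGroup E]
    [NormedSpace ℝ E] {C : Set E} (hC : Convex ℝ C) {O : Set (C × B0)} (hO : IsOpen O) :
    IsFiberANR B0 O fun p => (p : C × B0).2 := by
  refine ⟨inferInstance, by fun_prop, fun M _ _ π₁ hπ₁ ι hι hιfp => ?_⟩
  let := metrizableSpaceMetric M
  rcases isEmpty_or_nonempty O with hOe | hOne
  · refine ⟨∅, by simp [range_eq_empty ι], isEmptyElim, ?_, isEmptyElim, isEmptyElim,
      isEmptyElim⟩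
    exact continuous_of_discreteTopology
  set e := hι.isEmbedding.toHomeomorph
  obtain ⟨F, hF, hFι, hFC⟩ := hC.exists_continuous_extension hι.isClosed_range
    (range_nonempty ι) (fun a => ((e.symm a : O) : C × B0).1) (by fun_prop)
    fun a => ((e.symm a : O) : C × B0).1.2
  set Φ : M → C × B0 := fun m => (⟨F m, hFC m⟩, π₁ m)
  have hΦ : Continuous Φ := (hF.codRestrict _).prodMk hπ₁
  have hΦι : ∀ z : O, Φ (ι z) = z := fun z => by
    refine Prod.ext (Subtype.ext ?_) (hιfp z)
    change F (ι z) = _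
    rw [hFι ⟨ι z, mem_range_self z⟩]
    exact congrArg (fun z : O => ((z : C × B0).1 : E)) (e.symm_apply_apply z)
  refine ⟨Φ ⁻¹' O, (hO.preimage hΦ).mem_nhdsSet.2 ?_, fun m => ι ⟨Φ m, m.2⟩,
    hι.continuous.comp ((hΦ.comp continuous_subtype_val).subtype_mk _), fun m => mem_range_self _,
    fun m => hιfp _, ?_⟩
  · rintro _ ⟨z, rfl⟩
    simpa only [mem_preimage, hΦι] using z.2
  · rintro ⟨_, hm⟩ ⟨z, rfl⟩
    exact congrArg ι (Subtype.ext (hΦι z))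

lemma tweight_le_of_subset_closure_prod [MetrizableSpace B0] {E : Type u} [PseudoMetricSpace E]
    {C D : Set E} (hCD : C ⊆ closure D) (O : Set (C × B0)) :
    tweight O ≤ max (max #D (tweight B0)) ℵ₀ := by
  let := metrizableSpaceMetric B0
  obtain ⟨DB, hDB, hDBw⟩ := exists_dense_mk_le_tweight B0
  have he : IsInducing fun p : O => (((p : C × B0).1 : E), (p : C × B0).2) :=
    (IsInducing.subtypeVal.prodMap IsInducing.id).comp IsInducing.subtypeVal
  refine (tweight_le_of_isInducing he (D := D ×ˢ DB) ?_).trans ?_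
  · rintro _ ⟨p, rfl⟩
    rw [closure_prod_eq, hDB.closure_eq]
    exact ⟨hCD (p : C × B0).1.2, mem_univ _⟩
  · rw [mk_congr (Equiv.Set.prod D DB), mk_prod, lift_id, lift_id]
    refine max_le ((mul_le_max _ _).trans ?_) (le_max_right _ _)
    gcongr

theorem IsFiberANR.exists_factorization_through_isOpen [MetrizableSpace B0] {X Y : Type u}
    [TopologicalSpace X] [TopologicalSpace Y] {πX : X → B0} {πY : Y → B0}
    (hY : IsFiberANR B0 Y πY) {E : Type u} [NormedAddCommGroup E] [NormedSpace ℝ E]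
    {H C : Set E} (hCH : C ⊆ H) {i : Y → H × B0} (hi : IsClosedEmbedding i)
    (hfp : ∀ y, (i y).2 = πY y) (hπX : Continuous πX) {f : X → Y} (hf : IsFPMap πX πY f)
    (hfC : ∀ x, ((i (f x)).1 : E) ∈ C) :
    ∃ O : Set (C × B0), IsOpen O ∧ ∃ (g : X → O) (h : O → Y),
      IsFPMap πX (fun p : O => (p : C × B0).2) g ∧ IsFPMap (fun p : O => (p : C × B0).2) πY h ∧
      ∀ x, h (g x) = f x := by
  obtain ⟨V, hV, hiV, ρ, hρ, hρfp, hρi⟩ := hY.exists_retraction continuous_snd hi hfp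
  let incl : C × B0 → H × B0 := Prod.map (inclusion hCH) id
  have hincl : Continuous incl := (continuous_inclusion hCH).prodMap continuous_id
  let g₀ : X → C × B0 := fun x => (⟨(i (f x)).1, hfC x⟩, πX x)
  have hg₀ : ∀ x, incl (g₀ x) = i (f x) := fun x =>
    Prod.ext rfl ((hf.2 x).symm.trans (hfp (f x)).symm)
  have hg₀V : ∀ x, g₀ x ∈ incl ⁻¹' V := fun x => by
    simpa only [mem_preimage, hg₀] using hiV (mem_range_self (f x))
  refine ⟨incl ⁻¹' V, hV.preimage hincl, fun x => ⟨g₀ x, hg₀V x⟩, fun z => ρ ⟨incl z, z.2⟩,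
    ⟨?_, fun x => rfl⟩, ⟨?_, fun z => hρfp _⟩, fun x => ?_⟩
  · have hcont : Continuous fun x => ((i (f x)).1 : E) :=
      continuous_subtype_val.comp (continuous_fst.comp (hi.continuous.comp hf.1))
    exact ((hcont.subtype_mk _).prodMk hπX).subtype_mk _
  · exact hρ.comp ((hincl.comp continuous_subtype_val).subtype_mk _)
  · rw [← hρi (f x) (hiV (mem_range_self _))]
    exact congrArg ρ (Subtype.ext (hg₀ x))

end FiberANR

/-- Lemma 1.3: every f.p. map from a space `X` over `B0` to an `ANR_{B0}`-space `Y` factors as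
`h ∘ g` through an `ANR_{B0}`-space `Z` of weight `w(Z) ≤ max {w(X), w(B0), ℵ₀}`. -/
theorem fiberANR_factorization (B0 : Type u) [TopologicalSpace B0] [MetrizableSpace B0]
    (X : Type u) [TopologicalSpace X] (πX : X → B0) (hπX : Continuous πX)
    (Y : Type u) [TopologicalSpace Y] (πY : Y → B0) (hY : IsFiberANR B0 Y πY)
    (f : X → Y) (hf : IsFPMap πX πY f) :
    ∃ (Z : Type u) (_ : TopologicalSpace Z) (πZ : Z → B0),
      IsFiberANR B0 Z πZ ∧
      tweight Z ≤ max (max (tweight X) (tweight B0)) Cardinal.aleph0 ∧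
      ∃ (g : X → Z) (h : Z → Y), IsFPMap πX πZ g ∧ IsFPMap πZ πY h ∧ ∀ x, h (g x) = f x := by
  rcases isEmpty_or_nonempty Y with hYe | ⟨⟨y₀⟩⟩
  · exact ⟨Y, _, πY, hY, (tweight_le_one_of_isEmpty Y).trans
      (one_le_aleph0.trans (le_max_right _ _)), f, id, hf, ⟨continuous_id, fun _ => rfl⟩,
      fun _ => rfl⟩
  let := hY.1
  let := metrizableSpaceMetric Y
  set k := kuratowskiMap y₀
  obtain ⟨T, hT, hTX⟩ := exists_dense_mk_le_tweight X
  obtain ⟨D, hD, hDT⟩ := exists_closure_span_subset_closure_mk_le (k ∘ f '' T)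
  set C := closure (Submodule.span ℝ (k ∘ f '' T) : Set (Y →ᵇ ℝ)) ∩ convexHull ℝ (range k)
  have hC : Convex ℝ C := (Submodule.span ℝ _).convex.closure.inter (convex_convexHull ℝ _)
  have hfC : ∀ x, k (f x) ∈ C := fun x =>
    ⟨closure_mono Submodule.subset_span <| ((isometry_kuratowskiMap y₀).continuous.comp
        hf.1).range_subset_closure_image_dense hT ⟨x, rfl⟩,
      subset_convexHull ℝ _ (mem_range_self _)⟩
  obtain ⟨O, hO, g, h, hg, hh, hgh⟩ := hY.exists_factorization_through_isOpen inter_subset_right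
    ((isClosedEmbedding_kuratowskiMap_convexHull y₀).prodMk_of_continuous hY.2.1) (fun _ => rfl)
    hπX hf hfC
  refine ⟨O, _, _, hC.isFiberANR_of_isOpen hO, ?_, g, h, hg, hh, hgh⟩
  calc tweight O ≤ max (max #D (tweight B0)) ℵ₀ :=
        tweight_le_of_subset_closure_prod (inter_subset_left.trans hD) O
    _ ≤ max (max (max (tweight X) ℵ₀) (tweight B0)) ℵ₀ := by
        gcongr
        exact hDT.trans (max_le_max_right _ (mk_image_le.trans hTX))
    _ = max (max (tweight X) (tweight B0)) ℵ₀ := by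
        rw [max_right_comm (tweight X), max_assoc, max_self]
end

section
/- Let X be a topological space over B0, let P and P' be ANR_{B0}-spaces, let f : X → P' and h0, h1 : P' → P be f.p. maps, and let S : X × I → P be an f.p. homotopy with S(x,0) = h0(f(x)) and S(x,1) = h1(f(x)) for all x ∈ X. Then there exist an ANR_{B0}-space P'', f.p. maps f' : X → P'' and h : P'' → P', and an f.p. homotopy K : P'' × I → P such that h ∘ f' = f, K(z,0) = h0(h(z)) and K(z,1) = h1(h(z)) for all z ∈ P'', and K ∘ (f' × id_I) = S. -/
open Set Topology TopologicalSpace unitInterval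

universe u

/-!
The space `P''` is the fibrewise path space of pairs `(p, ω)`, with `p ∈ P'` and `ω` a path from
`h0 p` to `h1 p` in the fibre of `P` over `πP' p`; then `f' x = (f x, S (x, ·))`, `h` is the first
projection and `K` is evaluation. All that needs proof is that `P''` is an `ANR_{B0}`.

For this we use that being an `ANR_{B0}` is the same as being a neighbourhood extensor over `B0`.
An `ANR_{B0}` `Y` embeds fibrewise as a closed subset of `B0 × C`, with `C` the convex hull of the
Kuratowski–Wojdysławski image of `Y` in `Y →ᵇ ℝ`; maps into `C` extend by Dugundji's theorem and
are retracted back to `Y`. A map into `P''` given on a closed set `A` is then extended in two steps: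
its `P'` component by the extension property of `P'`, then its paths, as a map on
`A × I ∪ V × ∂I`, by that of `P`; compactness of `I` yields a neighbourhood `U` of `A` with `U × I`
inside the domain of the extension.
-/

open Metric Filter
open scoped BoundedContinuousFunction

section Dugundji

variable {X E : Type*} [MetricSpace X] [NormedAddCommGroup E] [NormedSpace ℝ E]

theorem exists_partitionOfUnity_compl_dist_le {A : Set X} (hA : IsClosed A) (hAne : A.Nonempty) :
    ∃ (ρ : PartitionOfUnity (↥Aᶜ) (↥Aᶜ) univ) (a : ↥Aᶜ → X), (∀ q, a q ∈ A) ∧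
      ∀ p q, ρ q p ≠ 0 → ∀ x ∈ A, dist (a q) x ≤ 4 * dist (p : X) x := by
  have hpos : ∀ q : ↥Aᶜ, 0 < infDist (q : X) A := fun q =>
    (hA.notMem_iff_infDist_pos hAne).mp q.2
  obtain ⟨ρ, hρ⟩ := PartitionOfUnity.exists_isSubordinate isClosed_univ
    (fun q : ↥Aᶜ => {p : ↥Aᶜ | dist (p : X) q < infDist (q : X) A / 4})
    (fun q => isOpen_lt (continuous_subtype_val.dist continuous_const) continuous_const)
    (fun p _ => mem_iUnion.2 ⟨p, by simpa using hpos p⟩)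
  have hnear : ∀ q : ↥Aᶜ, ∃ a ∈ A, dist (q : X) a < 2 * infDist (q : X) A := fun q =>
    (infDist_lt_iff hAne).mp (by linarith [hpos q])
  choose a haA hqa using hnear
  refine ⟨ρ, a, haA, fun p q hpq x hx => ?_⟩
  have hpq : dist (p : X) q < infDist (q : X) A / 4 := hρ q (subset_tsupport _ hpq)
  have hqx : infDist (q : X) A ≤ dist (q : X) x := infDist_le_dist_of_mem hx
  have h1 := dist_triangle4 (a q) q p x
  have h2 := dist_triangle (q : X) p x
  rw [dist_comm (a q) (q : X), dist_comm (q : X) p] at h1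
  rw [dist_comm (q : X) p] at h2
  linarith [hqa q]

/-- **Dugundji extension theorem**. -/
theorem exists_continuous_extension_mem_convex {A : Set X} (hA : IsClosed A) {C : Set E}
    (hC : Convex ℝ C) (hCne : C.Nonempty) {f : X → E} (hf : ContinuousOn f A)
    (hfC : MapsTo f A C) : ∃ g : X → E, Continuous g ∧ EqOn g f A ∧ ∀ x, g x ∈ C := by
  rcases A.eq_empty_or_nonempty with rfl | hAne
  · exact ⟨fun _ => hCne.some, continuous_const, fun _ h => h.elim, fun _ => hCne.some_mem⟩
  classical
  obtain ⟨ρ, a, haA, hdist⟩ := exists_partitionOfUnity_compl_dist_le hA hAne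
  set gc : ↥Aᶜ → E := fun p => ∑ᶠ q, ρ q p • f (a q)
  have hgc_mem : ∀ p {t : Set E}, Convex ℝ t → (∀ q, ρ q p ≠ 0 → f (a q) ∈ t) → gc p ∈ t :=
    fun p _ ht h => ρ.finsum_smul_mem_convex (g := fun q _ => f (a q)) (mem_univ p) h ht
  set g : X → E := fun x => if hx : x ∈ A then f x else gc ⟨x, hx⟩
  refine ⟨g, continuous_iff_continuousAt.2 fun x => ?_, fun x hx => dif_pos hx, fun x => ?_⟩
  · by_cases hx : x ∈ A
    · refine Metric.continuousAt_iff.2 fun ε hε => ?_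
      obtain ⟨δ, hδ, hfδ⟩ := Metric.continuousWithinAt_iff.1 (hf x hx) ε hε
      refine ⟨δ / 4, by positivity, fun y hy => ?_⟩
      rw [show g x = f x from dif_pos hx, ← mem_ball]
      by_cases hyA : y ∈ A
      · rw [show g y = f y from dif_pos hyA]
        exact hfδ hyA (by linarith)
      · rw [show g y = gc ⟨y, hyA⟩ from dif_neg hyA]
        refine hgc_mem _ (convex_ball _ _) fun q hq => hfδ (haA q) ?_
        linarith [hdist ⟨y, hyA⟩ q hq x hx]
    · have hgc : Continuous gc := ρ.continuous_finsum_smul fun _ _ _ => continuousAt_const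
      have : ContinuousOn g Aᶜ := continuousOn_iff_continuous_domRestrict.2 <|
        hgc.congr fun p => (dif_neg p.2 : g p = gc p).symm
      exact this.continuousAt (hA.isOpen_compl.mem_nhds hx)
  · by_cases hx : x ∈ A
    · simpa [g, hx] using hfC hx
    · simpa [g, hx] using hgc_mem ⟨x, hx⟩ hC fun q _ => hfC (haA q)

end Dugundji

section KuratowskiWojdyslawski

variable {Y : Type*} [MetricSpace Y]

def kuratowskiWojdyslawski (y₀ y : Y) : Y →ᵇ ℝ :=
  .ofNormedAddCommGroup (fun w => dist y w - dist y₀ w) (by fun_prop) (dist y y₀)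
    fun w => by simpa [Real.norm_eq_abs] using abs_dist_sub_le y y₀ w

theorem kuratowskiWojdyslawski_apply (y₀ y w : Y) :
    kuratowskiWojdyslawski y₀ y w = dist y w - dist y₀ w := rfl

theorem isometry_kuratowskiWojdyslawski (y₀ : Y) : Isometry (kuratowskiWojdyslawski y₀) := by
  refine Isometry.of_dist_eq fun y y' => le_antisymm ?_ ?_
  · refine (BoundedContinuousFunction.dist_le dist_nonneg).2 fun w => ?_
    simpa [Real.dist_eq, kuratowskiWojdyslawski_apply] using abs_dist_sub_le y y' w
  · simpa [Real.dist_eq, kuratowskiWojdyslawski_apply] using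
      BoundedContinuousFunction.dist_coe_le_dist (f := kuratowskiWojdyslawski y₀ y)
        (g := kuratowskiWojdyslawski y₀ y') y'

theorem exists_pos_mul_dist_le_dist_kuratowskiWojdyslawski {y₀ : Y} {p : Y →ᵇ ℝ}
    (hp : p ∈ convexHull ℝ (range (kuratowskiWojdyslawski y₀))) :
    ∃ ζ : Y, ∃ c > 0, ∀ y, c * dist ζ y ≤ dist (kuratowskiWojdyslawski y₀ y) p := by
  -- `p ↦ p y + dist y₀ y` is affine and equals `dist ζ y` at `p = kuratowskiWojdyslawski y₀ ζ`
  set T : Set (Y →ᵇ ℝ) := {p | ∃ ζ : Y, ∃ c > 0, ∀ y, c * dist ζ y ≤ p y + dist y₀ y}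
  have hT : Convex ℝ T := by
    rintro p ⟨ζ, c, hc, hζ⟩ q ⟨ξ, d, hd, hξ⟩ a b ha hb hab
    have hq : ∀ y, 0 ≤ q y + dist y₀ y := fun y => (by positivity : 0 ≤ d * dist ξ y).trans (hξ y)
    have hcomb : ∀ y, (a • p + b • q) y + dist y₀ y =
        a * (p y + dist y₀ y) + b * (q y + dist y₀ y) := fun y => by
      simp only [BoundedContinuousFunction.coe_add, BoundedContinuousFunction.coe_smul,
        Pi.add_apply, smul_eq_mul]
      linear_combination (-dist y₀ y) * hab
    rcases ha.lt_or_eq with ha | rfl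
    · refine ⟨ζ, a * c, by positivity, fun y => ?_⟩
      rw [hcomb, mul_assoc]
      nlinarith [hζ y, hq y]
    · rw [zero_add] at hab
      subst hab
      simpa using ⟨ξ, d, hd, hξ⟩
  have hrange : range (kuratowskiWojdyslawski y₀) ⊆ T := by
    rintro _ ⟨ζ, rfl⟩
    exact ⟨ζ, 1, one_pos, fun y => by simp [kuratowskiWojdyslawski_apply]⟩
  obtain ⟨ζ, c, hc, hζ⟩ := convexHull_min hrange hT hp
  refine ⟨ζ, c, hc, fun y => (hζ y).trans ?_⟩
  have := BoundedContinuousFunction.dist_coe_le_dist (f := kuratowskiWojdyslawski y₀ y) (g := p) y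
  rw [Real.dist_eq, kuratowskiWojdyslawski_apply, dist_self, zero_sub, ← neg_add', abs_neg,
    add_comm] at this
  exact (le_abs_self _).trans this

theorem isClosedEmbedding_codRestrict_kuratowskiWojdyslawski (y₀ : Y) :
    IsClosedEmbedding (codRestrict (kuratowskiWojdyslawski y₀)
      (convexHull ℝ (range (kuratowskiWojdyslawski y₀)))
      fun y => subset_convexHull ℝ _ (mem_range_self y)) := by
  set e := kuratowskiWojdyslawski y₀
  set e' : Y → convexHull ℝ (range e) :=
    codRestrict e _ fun y => subset_convexHull ℝ _ (mem_range_self y)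
  have he' : IsEmbedding e' := (isometry_kuratowskiWojdyslawski y₀).isEmbedding.codRestrict _ _
  refine ⟨he', isClosed_of_closure_subset fun p hp => ?_⟩
  obtain ⟨ζ, c, hc, hζ⟩ := exists_pos_mul_dist_le_dist_kuratowskiWojdyslawski p.2
  obtain ⟨u, hu, hlim⟩ := mem_closure_iff_seq_limit.1 hp
  choose y hy using hu
  obtain rfl : u = e' ∘ y := funext fun n => (hy n).symm
  have hdist : Tendsto (fun n => dist (e (y n)) p / c) atTop (𝓝 0) := by
    rw [← zero_div c]
    exact (tendsto_iff_dist_tendsto_zero.1 hlim).div_const c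
  have hyζ : Tendsto y atTop (𝓝 ζ) := by
    refine tendsto_iff_dist_tendsto_zero.2 <|
      squeeze_zero (fun _ => dist_nonneg) (fun n => ?_) hdist
    rw [le_div_iff₀ hc, dist_comm, mul_comm]
    exact hζ (y n)
  refine ⟨ζ, tendsto_nhds_unique ?_ hlim⟩
  exact (he'.continuous.tendsto ζ).comp hyζ

end KuratowskiWojdyslawski

section FiberExtension

variable {B0 Y : Type u} [TopologicalSpace B0] [TopologicalSpace Y] {πY : Y → B0}

/-- The extension property behind `IsFiberANE`, phrased for total maps `f : X → Y` that are
continuous on the closed set `A`. -/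
def FiberNhdExtensionProperty (B0 : Type u) [TopologicalSpace B0] (Y : Type u)
    [TopologicalSpace Y] (πY : Y → B0) : Prop :=
  ∀ (X : Type u) [TopologicalSpace X] [MetrizableSpace X] (πX : X → B0), Continuous πX →
    ∀ A : Set X, IsClosed A → ∀ f : X → Y, ContinuousOn f A → (∀ x ∈ A, πY (f x) = πX x) →
      ∃ U, IsOpen U ∧ A ⊆ U ∧ ∃ g : X → Y, ContinuousOn g U ∧ (∀ x ∈ U, πY (g x) = πX x) ∧
        EqOn g f A

theorem IsFiberANR.fiberNhdExtensionProperty [MetrizableSpace B0] (hY : IsFiberANR B0 Y πY) :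
    FiberNhdExtensionProperty B0 Y πY := by
  intro X _ _ πX hπX A hA f hf hfπ
  obtain ⟨_, hπY, hretract⟩ := hY
  rcases isEmpty_or_nonempty X with hX | ⟨⟨x₀⟩⟩
  · exact ⟨univ, isOpen_univ, subset_univ _, f, fun x => isEmptyElim x, fun x => isEmptyElim x,
      fun x => isEmptyElim x⟩
  have : Nonempty Y := ⟨f x₀⟩
  let := metrizableSpaceMetric X
  let := metrizableSpaceMetric Y
  set e := kuratowskiWojdyslawski (f x₀)
  set H := convexHull ℝ (range e)
  have heH : ∀ y, e y ∈ H := fun y => subset_convexHull ℝ _ (mem_range_self y)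
  set j : Y → B0 × H := fun y => (πY y, codRestrict e H heH y)
  have hj : IsClosedEmbedding j :=
    (IsClosedEmbedding.id.prodMap (isClosedEmbedding_codRestrict_kuratowskiWojdyslawski _)).comp
      (Function.LeftInverse.isClosedEmbedding (f := Prod.snd) (fun _ => rfl) continuous_snd
        (hπY.prodMk continuous_id))
  obtain ⟨U₀, hU₀, r, hrc, hr_mem, hr_π, hr_id⟩ :=
    hretract (B0 × H) inferInstance inferInstance Prod.fst continuous_fst j hj fun _ => rfl
  obtain ⟨g₀, hg₀c, hg₀f, hg₀H⟩ := exists_continuous_extension_mem_convex hA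
    (convex_convexHull ℝ _) ⟨_, heH (f x₀)⟩
    ((isometry_kuratowskiWojdyslawski _).continuous.comp_continuousOn hf) fun x _ => heH (f x)
  set G : X → B0 × H := fun x => (πX x, ⟨g₀ x, hg₀H x⟩)
  have hGc : Continuous G := hπX.prodMk (hg₀c.subtype_mk _)
  have hGA : ∀ x ∈ A, G x = j (f x) := fun x hx =>
    Prod.ext (hfπ x hx).symm (Subtype.ext (hg₀f hx))
  classical
  set R : B0 × H → B0 × H := fun z => if hz : z ∈ U₀ then r ⟨z, hz⟩ else z
  have hRc : ContinuousOn R U₀ := continuousOn_iff_continuous_domRestrict.2 <|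
    hrc.congr fun z => (dif_pos z.2 : R z = r z).symm
  have hR_mem : MapsTo R U₀ (range j) := fun z hz => by simpa [R, hz] using hr_mem ⟨z, hz⟩
  set jinv := (hj.isEmbedding.toPartialHomeomorph j).symm
  have hj_jinv : ∀ z ∈ range j, j (jinv z) = z := fun z hz =>
    hj.isEmbedding.toPartialHomeomorph_right_inv j hz
  have hRG : ∀ x (hx : G x ∈ U₀), R (G x) = r ⟨G x, hx⟩ := fun x hx => dif_pos hx
  have hGA_mem : ∀ x ∈ A, G x ∈ interior U₀ := fun x hx =>
    subset_interior_iff_mem_nhdsSet.2 hU₀ ⟨f x, (hGA x hx).symm⟩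
  refine ⟨G ⁻¹' interior U₀, isOpen_interior.preimage hGc, hGA_mem, jinv ∘ R ∘ G,
    ?_, fun x hx => ?_, fun x hx => ?_⟩
  · have hjinv : ContinuousOn jinv (range j) := by
      simpa using (hj.isEmbedding.toPartialHomeomorph j).continuousOn_symm
    exact hjinv.comp (hRc.comp hGc.continuousOn fun x hx => interior_subset hx)
      fun x hx => hR_mem (interior_subset hx)
  · have hxU₀ : G x ∈ U₀ := interior_subset hx
    change (j (jinv (R (G x)))).1 = πX x
    rw [hj_jinv _ (hR_mem hxU₀), hRG x hxU₀, hr_π]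
  · have hxU₀ : G x ∈ U₀ := interior_subset (hGA_mem x hx)
    change jinv (R (G x)) = f x
    rw [hRG x hxU₀, hr_id _ ⟨f x, (hGA x hx).symm⟩]
    change jinv (G x) = f x
    rw [hGA x hx]
    exact hj.isEmbedding.toPartialHomeomorph_left_inv j

theorem IsFiberANR.of_fiberNhdExtensionProperty [MetrizableSpace Y] (hπY : Continuous πY)
    (hY : FiberNhdExtensionProperty B0 Y πY) : IsFiberANR B0 Y πY := by
  refine ⟨inferInstance, hπY, fun X _ _ πX hπX i hi hiπ => ?_⟩
  rcases isEmpty_or_nonempty Y with hY₀ | hY₀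
  · exact ⟨∅, by simp [range_eq_empty i], isEmptyElim, continuous_of_discreteTopology, isEmptyElim,
      isEmptyElim, isEmptyElim⟩
  set φ := hi.isEmbedding.toPartialHomeomorph i
  obtain ⟨U, hU, hiU, g, hgc, hgπ, hgi⟩ := hY X πX hπX (range i) hi.isClosed_range φ.symm
    (by simpa [φ] using φ.continuousOn_symm)
    (by rintro _ ⟨y, rfl⟩; rw [hi.isEmbedding.toPartialHomeomorph_left_inv, hiπ])
  refine ⟨U, hU.mem_nhdsSet.2 hiU, fun u => i (g u),
    hi.continuous.comp (continuousOn_iff_continuous_domRestrict.1 hgc), fun u => mem_range_self _,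
    fun u => by rw [hiπ, hgπ u u.2], fun u hu => ?_⟩
  change i (g u) = u
  rw [hgi hu]
  exact hi.isEmbedding.toPartialHomeomorph_right_inv i hu

end FiberExtension

theorem isOpen_setOf_forall_prodMk_mem {X K : Type*} [TopologicalSpace X] [TopologicalSpace K]
    [CompactSpace K] {W : Set (X × K)} (hW : IsOpen W) : IsOpen {x | ∀ t, (x, t) ∈ W} := by
  convert (isClosedMap_fst_of_compactSpace _ hW.isClosed_compl).isOpen_compl using 1
  ext x
  simp

section FiberHomotopyExtension

variable {B0 P Z : Type u} [TopologicalSpace B0] [TopologicalSpace P] [TopologicalSpace Z]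
  [MetrizableSpace Z] {πP : P → B0} {πZ : Z → B0}

theorem FiberNhdExtensionProperty.exists_homotopy_extension
    (hP : FiberNhdExtensionProperty B0 P πP) (hπZ : Continuous πZ) {A V : Set Z}
    (hA : IsClosed A) (hV : IsOpen V) (hAV : A ⊆ V) {a₀ a₁ : Z → P} (ha₀ : ContinuousOn a₀ V)
    (ha₁ : ContinuousOn a₁ V) (ha₀π : ∀ z ∈ V, πP (a₀ z) = πZ z)
    (ha₁π : ∀ z ∈ V, πP (a₁ z) = πZ z) {H : Z × I → P} (hH : ContinuousOn H (A ×ˢ univ))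
    (hHπ : ∀ z ∈ A, ∀ t, πP (H (z, t)) = πZ z) (hH₀ : ∀ z ∈ A, H (z, 0) = a₀ z)
    (hH₁ : ∀ z ∈ A, H (z, 1) = a₁ z) :
    ∃ U, IsOpen U ∧ A ⊆ U ∧ U ⊆ V ∧ ∃ G : Z × I → P, ContinuousOn G (U ×ˢ univ) ∧
      (∀ z ∈ U, ∀ t, πP (G (z, t)) = πZ z) ∧ (∀ z ∈ U, G (z, 0) = a₀ z) ∧
      (∀ z ∈ U, G (z, 1) = a₁ z) ∧ ∀ z ∈ A, ∀ t, G (z, t) = H (z, t) := by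
  -- the ends are prescribed only on `closure V'`, a closed neighbourhood of `A` inside `V`
  obtain ⟨V', hV', hAV', hV'V⟩ := normal_exists_closure_subset hA hV hAV
  classical
  set F : Z × I → P := fun w => if w.1 ∈ A then H w else if w.2 = 0 then a₀ w.1 else a₁ w.1
  have hF₀ : ∀ z, F (z, 0) = a₀ z := fun z => by by_cases hz : z ∈ A <;> simp [F, hz, hH₀]
  have hF₁ : ∀ z, F (z, 1) = a₁ z := fun z => by by_cases hz : z ∈ A <;> simp [F, hz, hH₁]
  have hends : ∀ (t : I) (a : Z → P), ContinuousOn a V → (∀ z, F (z, t) = a z) →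
      ContinuousOn F (closure V' ×ˢ {t}) := fun t a ha hFa =>
    (ha.comp continuousOn_fst fun w hw => hV'V hw.1).congr fun w hw => by
      rw [Function.comp_apply, ← hFa, ← (mem_singleton_iff.1 hw.2 : w.2 = t)]
  have hends_closed : ∀ t : I, IsClosed (closure V' ×ˢ {t}) := fun t =>
    isClosed_closure.prod isClosed_singleton
  set A' : Set (Z × I) := A ×ˢ univ ∪ (closure V' ×ˢ {0} ∪ closure V' ×ˢ {1})
  have hF : ContinuousOn F A' :=
    (hH.congr fun w hw => if_pos hw.1).union_of_isClosed
      ((hends 0 a₀ ha₀ hF₀).union_of_isClosed (hends 1 a₁ ha₁ hF₁) (hends_closed 0)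
        (hends_closed 1))
      (hA.prod isClosed_univ) ((hends_closed 0).union (hends_closed 1))
  have hFπ : ∀ w ∈ A', πP (F w) = πZ w.1 := by
    rintro ⟨z, t⟩ (⟨hz, -⟩ | ⟨hz, rfl⟩ | ⟨hz, rfl⟩)
    · simpa [F, hz] using hHπ z hz t
    · simpa [hF₀] using ha₀π z (hV'V hz)
    · simpa [hF₁] using ha₁π z (hV'V hz)
  obtain ⟨W, hW, hA'W, G, hGc, hGπ, hGF⟩ :=
    hP (Z × I) (πZ ∘ Prod.fst) (hπZ.comp continuous_fst) A'
      ((hA.prod isClosed_univ).union ((hends_closed 0).union (hends_closed 1))) F hF hFπ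
  refine ⟨V' ∩ {z | ∀ t, (z, t) ∈ W}, hV'.inter (isOpen_setOf_forall_prodMk_mem hW),
    fun z hz => ⟨hAV' hz, fun t => hA'W (Or.inl ⟨hz, trivial⟩)⟩,
    fun z hz => hV'V (subset_closure hz.1), G, hGc.mono fun w hw => hw.1.2 w.2,
    fun z hz t => hGπ _ (hz.2 t), fun z hz => ?_, fun z hz => ?_, fun z hz t => ?_⟩
  · rw [hGF (show (z, 0) ∈ A' from Or.inr (Or.inl ⟨subset_closure hz.1, rfl⟩)), hF₀]
  · rw [hGF (show (z, 1) ∈ A' from Or.inr (Or.inr ⟨subset_closure hz.1, rfl⟩)), hF₁]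
  · rw [hGF (show (z, t) ∈ A' from Or.inl ⟨hz, trivial⟩)]
    exact if_pos hz

end FiberHomotopyExtension

section FiberPathSpace

variable {B0 P' P : Type u} [TopologicalSpace B0] [TopologicalSpace P'] [TopologicalSpace P]

abbrev FiberPathSpace (πP' : P' → B0) (πP : P → B0) (h0 h1 : P' → P) : Type u :=
  {z : P' × C(I, P) // z.2 0 = h0 z.1 ∧ z.2 1 = h1 z.1 ∧ ∀ t, πP (z.2 t) = πP' z.1}

theorem isFiberANR_fiberPathSpace [MetrizableSpace B0] {πP' : P' → B0} {πP : P → B0}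
    (hP' : IsFiberANR B0 P' πP') (hP : IsFiberANR B0 P πP) {h0 h1 : P' → P}
    (hh0 : IsFPMap πP' πP h0) (hh1 : IsFPMap πP' πP h1) :
    IsFiberANR B0 (FiberPathSpace πP' πP h0 h1) fun z => πP' z.1.1 := by
  have := hP'.1
  have := hP.1
  have : MetrizableSpace (FiberPathSpace πP' πP h0 h1) := IsEmbedding.subtypeVal.metrizableSpace
  refine .of_fiberNhdExtensionProperty (hP'.2.1.comp (continuous_fst.comp continuous_subtype_val))
    fun Z _ _ πZ hπZ A hA φ hφ hφπ => ?_
  obtain ⟨V, hV, hAV, ψ, hψ, hψπ, hψφ⟩ := hP'.fiberNhdExtensionProperty Z πZ hπZ A hA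
    (fun z => (φ z).1.1) ((continuous_fst.comp continuous_subtype_val).comp_continuousOn hφ) hφπ
  obtain ⟨U, hU, hAU, hUV, G, hGc, hGπ, hG₀, hG₁, hGφ⟩ :=
    hP.fiberNhdExtensionProperty.exists_homotopy_extension hπZ hA hV hAV
      (hh0.1.comp_continuousOn hψ) (hh1.1.comp_continuousOn hψ)
      (fun z hz => (hh0.2 _).trans (hψπ z hz)) (fun z hz => (hh1.2 _).trans (hψπ z hz))
      (H := fun w => (φ w.1).1.2 w.2)
      (continuous_eval.comp_continuousOn
        ((((continuous_snd.comp continuous_subtype_val).comp_continuousOn hφ).comp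
          continuousOn_fst fun _ hw => hw.1).prodMk continuousOn_snd))
      (fun z hz t => ((φ z).2.2.2 t).trans (hφπ z hz))
      (fun z hz => (φ z).2.1.trans (congrArg h0 (hψφ hz)).symm)
      (fun z hz => (φ z).2.2.1.trans (congrArg h1 (hψφ hz)).symm)
  let k : C(U × I, P) := ⟨fun w => G (w.1, w.2),
    hGc.comp_continuous (by fun_prop) fun w => ⟨w.1.2, trivial⟩⟩
  let ρ : U → FiberPathSpace πP' πP h0 h1 := fun u => ⟨(ψ u, k.curry u),
    hG₀ u u.2, hG₁ u u.2, fun t => (hGπ u u.2 t).trans (hψπ u (hUV u.2)).symm⟩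
  have hρ : Continuous ρ :=
    ((continuousOn_iff_continuous_domRestrict.1 (hψ.mono hUV)).prodMk
      k.curry.continuous).subtype_mk _
  classical
  set g : Z → FiberPathSpace πP' πP h0 h1 := fun z => if hz : z ∈ U then ρ ⟨z, hz⟩ else φ z
  refine ⟨U, hU, hAU, g,
    continuousOn_iff_continuous_domRestrict.2 (hρ.congr fun u => (dif_pos u.2 : g u = ρ u).symm),
    fun z hz => ?_, fun z hz => ?_⟩
  · simpa [g, dif_pos hz, ρ] using hψπ z (hUV hz)
  · simp only [g, dif_pos (hAU hz)]
    exact Subtype.ext (Prod.ext (hψφ hz) (ContinuousMap.ext fun t => hGφ z hz t))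

end FiberPathSpace

theorem fiberANR_homotopy_factorization_general (B0 : Type u) [TopologicalSpace B0] [MetrizableSpace B0]
    (X : Type u) [TopologicalSpace X] (πX : X → B0)
    (P : Type u) [TopologicalSpace P] (πP : P → B0) (hP : IsFiberANR B0 P πP)
    (P' : Type u) [TopologicalSpace P'] (πP' : P' → B0) (hP' : IsFiberANR B0 P' πP')
    (f : X → P') (hf : IsFPMap πX πP' f)
    (h0 h1 : P' → P) (hh0 : IsFPMap πP' πP h0) (hh1 : IsFPMap πP' πP h1)
    (S : X × unitInterval → P) (hS : Continuous S) (hSfp : ∀ x t, πP (S (x, t)) = πX x)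
    (hS0 : ∀ x, S (x, 0) = h0 (f x)) (hS1 : ∀ x, S (x, 1) = h1 (f x)) :
    ∃ (P'' : Type u) (_ : TopologicalSpace P'') (πP'' : P'' → B0),
      IsFiberANR B0 P'' πP'' ∧
      ∃ (f' : X → P'') (h : P'' → P'),
        IsFPMap πX πP'' f' ∧ IsFPMap πP'' πP' h ∧ (∀ x, h (f' x) = f x) ∧
        ∃ K : P'' × unitInterval → P, Continuous K ∧
          (∀ z t, πP (K (z, t)) = πP'' z) ∧
          (∀ z, K (z, 0) = h0 (h z)) ∧ (∀ z, K (z, 1) = h1 (h z)) ∧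
          ∀ x t, K (f' x, t) = S (x, t) := by
  let f' : X → FiberPathSpace πP' πP h0 h1 := fun x =>
    ⟨(f x, ContinuousMap.curry ⟨S, hS⟩ x), hS0 x, hS1 x, fun t => (hSfp x t).trans (hf.2 x).symm⟩
  let K : FiberPathSpace πP' πP h0 h1 × I → P := fun w => w.1.1.2 w.2
  refine ⟨FiberPathSpace πP' πP h0 h1, inferInstance, fun z => πP' z.1.1,
    isFiberANR_fiberPathSpace hP' hP hh0 hh1, f', fun z => z.1.1,
    ⟨(hf.1.prodMk (ContinuousMap.curry ⟨S, hS⟩).continuous).subtype_mk _, hf.2⟩,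
    ⟨continuous_fst.comp continuous_subtype_val, fun _ => rfl⟩, fun _ => rfl,
    K, by fun_prop, fun z t => z.2.2.2 t, fun z => z.2.1, fun z => z.2.2.1, fun _ _ => rfl⟩

/-- Lemma 1.8: given f.p. maps `f : X → P'`, `h0, h1 : P' → P` between `ANR_{B0}`-spaces and an
f.p. homotopy `S` from `h0 ∘ f` to `h1 ∘ f`, there are an `ANR_{B0}`-space `P''`, f.p. maps
`f' : X → P''` and `h : P'' → P'` with `h ∘ f' = f`, and an f.p. homotopy `K : P'' × I → P` from
`h0 ∘ h` to `h1 ∘ h` with `K ∘ (f' × 1_I) = S`. -/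
theorem fiberANR_homotopy_factorization (B0 : Type u) [TopologicalSpace B0] [MetrizableSpace B0]
    (X : Type u) [TopologicalSpace X] (πX : X → B0) (hπX : Continuous πX)
    (P : Type u) [TopologicalSpace P] (πP : P → B0) (hP : IsFiberANR B0 P πP)
    (P' : Type u) [TopologicalSpace P'] (πP' : P' → B0) (hP' : IsFiberANR B0 P' πP')
    (f : X → P') (hf : IsFPMap πX πP' f)
    (h0 h1 : P' → P) (hh0 : IsFPMap πP' πP h0) (hh1 : IsFPMap πP' πP h1)
    (S : X × unitInterval → P) (hS : Continuous S) (hSfp : ∀ x t, πP (S (x, t)) = πX x)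
    (hS0 : ∀ x, S (x, 0) = h0 (f x)) (hS1 : ∀ x, S (x, 1) = h1 (f x)) :
    ∃ (P'' : Type u) (_ : TopologicalSpace P'') (πP'' : P'' → B0),
      IsFiberANR B0 P'' πP'' ∧
      ∃ (f' : X → P'') (h : P'' → P'),
        IsFPMap πX πP'' f' ∧ IsFPMap πP'' πP' h ∧ (∀ x, h (f' x) = f x) ∧
        ∃ K : P'' × unitInterval → P, Continuous K ∧
          (∀ z t, πP (K (z, t)) = πP'' z) ∧
          (∀ z, K (z, 0) = h0 (h z)) ∧ (∀ z, K (z, 1) = h1 (h z)) ∧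
          ∀ x t, K (f' x, t) = S (x, t) :=
  fiberANR_homotopy_factorization_general B0 X πX P πP hP P' πP' hP' f hf h0 h1 hh0 hh1 S hS hSfp
    hS0 hS1
end

section
/- The relation 'there exists an f.p. coherent homotopy connecting f and f'' on the set of coherent maps over B0 from an inverse system X to an inverse system Y is an equivalence relation (reflexive, symmetric and transitive). -/
open Set Topology TopologicalSpace unitInterval

universe u

/-! ### Coherent maps over `B0` -/

/-- The pushforward of a point of a standard simplex along a map of index sets. -/
noncomputable def pushSimplex {m k : ℕ} (h : Fin m → Fin k) (t : stdSimplex ℝ (Fin m)) :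
    stdSimplex ℝ (Fin k) :=
  ⟨fun i => ∑ j ∈ Finset.univ.filter (fun j => h j = i), (t : Fin m → ℝ) j, by
    obtain ⟨h1, h2⟩ := t.2
    refine ⟨fun i => Finset.sum_nonneg fun j _ => h1 j, ?_⟩
    rw [Finset.sum_fiberwise Finset.univ h fun j => (t : Fin m → ℝ) j]
    exact h2⟩

/-- The `j`-th face map `∂ⁿ_j : Δⁿ → Δⁿ⁺¹` (inserting `0` in coordinate `j`). -/
noncomputable def simplexFace {n : ℕ} (j : Fin (n + 2)) :
    stdSimplex ℝ (Fin (n + 1)) → stdSimplex ℝ (Fin (n + 2)) :=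
  pushSimplex (Fin.succAbove j)

/-- The `j`-th degeneracy map `σⁿ_j : Δⁿ⁺¹ → Δⁿ` (adding coordinates `j` and `j + 1`). -/
noncomputable def simplexDegen {n : ℕ} (j : Fin (n + 1)) :
    stdSimplex ℝ (Fin (n + 2)) → stdSimplex ℝ (Fin (n + 1)) :=
  pushSimplex (Fin.predAbove j)

/-- The vertex of the `0`-simplex `Δ⁰`. -/
noncomputable def simplexPt : stdSimplex ℝ (Fin 1) :=
  ⟨fun _ => 1, fun _ => zero_le_one, by simp⟩

namespace FibInvSys

variable {B0 : Type u} [TopologicalSpace B0]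

/-- `𝒜ⁿ`: increasing sequences `(α₀ ≤ ⋯ ≤ αₙ)` of indices of the system `S`. -/
def IncSeq (S : FibInvSys B0) (n : ℕ) : Type u :=
  {β : Fin (n + 1) → S.Idx // ∀ i j : Fin (n + 1), i ≤ j → S.le (β i) (β j)}

/-- The `j`-th face operator `d_j : 𝒜ⁿ⁺¹ → 𝒜ⁿ`, deleting the `j`-th entry. -/
def seqFace (S : FibInvSys B0) {n : ℕ} (j : Fin (n + 2)) (β : S.IncSeq (n + 1)) : S.IncSeq n :=
  ⟨β.1 ∘ j.succAbove, fun i i' h => β.2 _ _ ((Fin.strictMono_succAbove j).monotone h)⟩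

/-- The `j`-th degeneracy operator `s_j : 𝒜ⁿ → 𝒜ⁿ⁺¹`, repeating the `j`-th entry. -/
def seqDegen (S : FibInvSys B0) {n : ℕ} (j : Fin (n + 1)) (β : S.IncSeq n) : S.IncSeq (n + 1) :=
  ⟨β.1 ∘ j.predAbove, fun i i' h => β.2 _ _ (Fin.predAbove_right_monotone j h)⟩

/-- The constant sequence `(b) ∈ ℬ⁰`. -/
def singleSeq (S : FibInvSys B0) (b : S.Idx) : S.IncSeq 0 :=
  ⟨fun _ => b, fun _ _ _ => S.le_refl b⟩

/-- The sequence `(b0 ≤ b1) ∈ ℬ¹`. -/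
def pairSeq (S : FibInvSys B0) (b0 b1 : S.Idx) (h : S.le b0 b1) : S.IncSeq 1 :=
  ⟨fun i => if i.1 = 0 then b0 else b1, by
    intro i j hij
    by_cases hi : i.1 = 0
    · by_cases hj : j.1 = 0
      · simp only [hi, hj, if_pos]
        exact S.le_refl b0
      · simp only [if_pos hi, if_neg hj]
        exact h
    · have hj : ¬ j.1 = 0 := by
        intro hj0
        exact hi (Nat.le_zero.mp (hj0 ▸ (hij : i.1 ≤ j.1)))
      simp only [if_neg hi, if_neg hj]
      exact S.le_refl b1⟩

/-- The inverse system `X × I = (X_α × I, p_{αα'} × 1_I, 𝒜)` over `B0`. -/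
def prodI (S : FibInvSys B0) : FibInvSys B0 where
  Idx := S.Idx
  le := S.le
  le_refl := S.le_refl
  le_trans := S.le_trans
  directed := S.directed
  obj a := S.obj a × unitInterval
  topInst a := inferInstance
  proj a z := S.proj a z.1
  proj_cont a := (S.proj_cont a).comp continuous_fst
  bond a a' h z := (S.bond a a' h z.1, z.2)
  bond_cont a a' h := Continuous.prodMk ((S.bond_cont a a' h).comp continuous_fst) continuous_snd
  bond_fp a a' h z := S.bond_fp a a' h z.1
  bond_id a z := by simp [S.bond_id]
  bond_comp a a' a'' h h' z := by simp [S.bond_comp]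

end FibInvSys

/-- A coherent map `f : X → Y` over `B0` between inverse systems in `Top_{B0}`: an index
function `φ` on increasing sequences together with f.p. maps
`f_β : X_{φ(β)} × Δⁿ → Y_{β₀}` satisfying the coherence conditions for faces and
degeneracies. -/
structure FPCoherentMap {B0 : Type u} [TopologicalSpace B0] (S T : FibInvSys B0) where
  φ : ∀ {n : ℕ}, T.IncSeq n → S.Idx
  f : ∀ {n : ℕ} (β : T.IncSeq n), S.obj (φ β) × stdSimplex ℝ (Fin (n + 1)) → T.obj (β.1 0)
  f_cont : ∀ {n : ℕ} (β : T.IncSeq n), Continuous (f β)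
  f_fp : ∀ {n : ℕ} (β : T.IncSeq n) (x : S.obj (φ β)) (t : stdSimplex ℝ (Fin (n + 1))),
    T.proj (β.1 0) (f β (x, t)) = S.proj (φ β) x
  φ_face : ∀ {n : ℕ} (β : T.IncSeq (n + 1)) (j : Fin (n + 2)),
    S.le (φ (T.seqFace j β)) (φ β)
  φ_degen : ∀ {n : ℕ} (β : T.IncSeq n) (j : Fin (n + 1)),
    S.le (φ β) (φ (T.seqDegen j β))
  coh_face : ∀ {n : ℕ} (β : T.IncSeq (n + 1)) (j : Fin (n + 2))
      (hb : T.le (β.1 0) ((T.seqFace j β).1 0)) (x : S.obj (φ β))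
      (t : stdSimplex ℝ (Fin (n + 1))),
      f β (x, simplexFace j t) =
        T.bond _ _ hb (f (T.seqFace j β) (S.bond _ _ (φ_face β j) x, t))
  coh_degen : ∀ {n : ℕ} (β : T.IncSeq n) (j : Fin (n + 1))
      (hb : T.le (β.1 0) ((T.seqDegen j β).1 0)) (x : S.obj (φ (T.seqDegen j β)))
      (t : stdSimplex ℝ (Fin (n + 2))),
      f β (S.bond _ _ (φ_degen β j) x, simplexDegen j t) =
        T.bond _ _ hb (f (T.seqDegen j β) (x, t))

/-- An f.p. coherent homotopy connecting the coherent maps `f` and `g`: a coherent map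
`F : X × I → Y` restricting to `f` at `0` and to `g` at `1`. -/
structure FPCoherentHomotopy {B0 : Type u} [TopologicalSpace B0] {S T : FibInvSys B0}
    (f g : FPCoherentMap S T) where
  F : FPCoherentMap S.prodI T
  le_left : ∀ {n : ℕ} (β : T.IncSeq n), S.le (f.φ β) (F.φ β)
  le_right : ∀ {n : ℕ} (β : T.IncSeq n), S.le (g.φ β) (F.φ β)
  at_zero : ∀ {n : ℕ} (β : T.IncSeq n) (x : S.obj (F.φ β)) (t : stdSimplex ℝ (Fin (n + 1))),
    F.f β ((x, 0), t) = f.f β (S.bond _ _ (le_left β) x, t)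
  at_one : ∀ {n : ℕ} (β : T.IncSeq n) (x : S.obj (F.φ β)) (t : stdSimplex ℝ (Fin (n + 1))),
    F.f β ((x, 1), t) = g.f β (S.bond _ _ (le_right β) x, t)

/-- Two coherent maps over `B0` are f.p. coherently homotopic. -/
def FPCohHomotopic {B0 : Type u} [TopologicalSpace B0] {S T : FibInvSys B0}
    (f g : FPCoherentMap S T) : Prop :=
  Nonempty (FPCoherentHomotopy f g)

/-!
Reflexivity and symmetry come from precomposing with maps of `X × I` (the projection to `X`, and
`t ↦ 1 - t`), which preserve coherence. For transitivity the two homotopies must first be brought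
over common spaces: using directedness, an index function `θ` above both of theirs is built by
recursion on the length of `β`, choosing `θ(β)` above the indices of all faces of `β`, so that
`θ` is again monotone under faces. Pulled back along the bonding maps to `θ`, the homotopies agree
at the junction and can be concatenated along `I`.
-/

namespace FibInvSys

variable {B0 : Type u} [TopologicalSpace B0] (S : FibInvSys B0)

lemma bond_bond {a a' a'' : S.Idx} (h : S.le a a') (h' : S.le a' a'') (x : S.obj a'') :
    S.bond a a' h (S.bond a' a'' h' x) = S.bond a a'' (S.le_trans _ _ _ h h') x :=
  S.bond_comp a a' a'' h h' x

-- `S.prodI.Idx` is `S.Idx` only after unfolding `prodI`, which instance search does not do; hence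
-- the explicit instance here and the `(a : S.Idx)` ascription in `prodIMap`.
lemma continuous_prodI_snd (a : S.prodI.Idx) : Continuous fun z : S.prodI.obj a => z.2 :=
  @continuous_snd _ _ (S.topInst a) _

lemma exists_upperBound {ι : Type*} [Fintype ι] (a : S.Idx) (g : ι → S.Idx) :
    ∃ c, S.le a c ∧ ∀ i, S.le (g i) c := by
  classical
  suffices ∀ s : Finset ι, ∃ c, S.le a c ∧ ∀ i ∈ s, S.le (g i) c by
    simpa using this Finset.univ
  intro s
  induction s using Finset.induction_on with
  | empty => exact ⟨a, S.le_refl a, by simp⟩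
  | insert i s _ ih =>
    obtain ⟨c, hac, hc⟩ := ih
    obtain ⟨d, hcd, hid⟩ := S.directed c (g i)
    refine ⟨d, S.le_trans _ _ _ hac hcd, ?_⟩
    simp only [Finset.mem_insert, forall_eq_or_imp]
    exact ⟨hid, fun j hj => S.le_trans _ _ _ (hc j hj) hcd⟩

noncomputable def upperBound {ι : Type*} [Fintype ι] (a : S.Idx) (g : ι → S.Idx) : S.Idx :=
  (S.exists_upperBound a g).choose

lemma le_upperBound {ι : Type*} [Fintype ι] (a : S.Idx) (g : ι → S.Idx) :
    S.le a (S.upperBound a g) :=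
  (S.exists_upperBound a g).choose_spec.1

lemma le_upperBound_of {ι : Type*} [Fintype ι] (a : S.Idx) (g : ι → S.Idx) (i : ι) :
    S.le (g i) (S.upperBound a g) :=
  (S.exists_upperBound a g).choose_spec.2 i

lemma seqFace_castSucc_seqDegen {n : ℕ} (j : Fin (n + 1)) (β : S.IncSeq n) :
    S.seqFace j.castSucc (S.seqDegen j β) = β :=
  Subtype.ext <| funext fun i => congrArg β.1 (Fin.predAbove_succAbove j i)

-- A morphism `S → S'` commuting strictly with the bonds; its index map runs from `S'` to `S`.
structure Hom (S S' : FibInvSys B0) where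
  idx : S'.Idx → S.Idx
  idx_mono : ∀ a b, S'.le a b → S.le (idx a) (idx b)
  app : ∀ a, S.obj (idx a) → S'.obj a
  app_cont : ∀ a, Continuous (app a)
  app_fp : ∀ a x, S'.proj a (app a x) = S.proj (idx a) x
  app_bond : ∀ a b (h : S'.le a b) x,
    app a (S.bond _ _ (idx_mono a b h) x) = S'.bond a b h (app b x)

def prodIFst : S.prodI.Hom S where
  idx a := a
  idx_mono _ _ h := h
  app _ z := z.1
  app_cont _ := continuous_fst
  app_fp _ _ := rfl
  app_bond _ _ _ _ := rfl

def prodIMap (r : I → I) (hr : Continuous r) : S.prodI.Hom S.prodI where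
  idx a := a
  idx_mono _ _ h := h
  app _ := Prod.map id r
  app_cont (a : S.Idx) := (continuous_id (X := S.obj a)).prodMap hr
  app_fp _ _ := rfl
  app_bond _ _ _ _ := rfl

end FibInvSys

namespace unitInterval

noncomputable def stretchLow (s : I) : I :=
  Set.projIcc 0 1 zero_le_one (2 * (s : ℝ))

noncomputable def stretchHigh (s : I) : I :=
  Set.projIcc 0 1 zero_le_one (2 * (s : ℝ) - 1)

lemma continuous_stretchLow : Continuous stretchLow :=
  continuous_projIcc.comp (by fun_prop)

lemma continuous_stretchHigh : Continuous stretchHigh :=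
  continuous_projIcc.comp (by fun_prop)

lemma stretchLow_zero : stretchLow 0 = 0 :=
  Subtype.ext (by simp [stretchLow])

lemma stretchHigh_one : stretchHigh 1 = 1 :=
  Subtype.ext (by norm_num [stretchHigh])

lemma stretchLow_of_eq_half {s : I} (h : (s : ℝ) = 1 / 2) : stretchLow s = 1 :=
  Subtype.ext (by simp [stretchLow, h])

lemma stretchHigh_of_eq_half {s : I} (h : (s : ℝ) = 1 / 2) : stretchHigh s = 0 :=
  Subtype.ext (by simp [stretchHigh, h])

end unitInterval

section Coherent

variable {B0 : Type u} [TopologicalSpace B0] {S S' T : FibInvSys B0}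

/-- Monotonicity under degeneracies is not required: it follows from `d_j ∘ s_j = id`
(`le_degen`). -/
structure CoherentIndexFun (S T : FibInvSys B0) where
  toFun : ∀ {n : ℕ}, T.IncSeq n → S.Idx
  le_face : ∀ {n : ℕ} (β : T.IncSeq (n + 1)) (j : Fin (n + 2)),
    S.le (toFun (T.seqFace j β)) (toFun β)

namespace CoherentIndexFun

variable (θ : CoherentIndexFun S T)

lemma le_degen {n : ℕ} (β : T.IncSeq n) (j : Fin (n + 1)) :
    S.le (θ.toFun β) (θ.toFun (T.seqDegen j β)) := by
  simpa only [T.seqFace_castSucc_seqDegen] using θ.le_face (T.seqDegen j β) j.castSucc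

-- The index of `β ∈ ℬⁿ⁺¹` is chosen above those already chosen for its faces.
noncomputable def supFun (Φ Ψ : ∀ n : ℕ, T.IncSeq n → S.Idx) : ∀ n : ℕ, T.IncSeq n → S.Idx
  | 0, β => S.upperBound (Φ 0 β) fun _ : Unit => Ψ 0 β
  | n + 1, β => S.upperBound (Φ (n + 1) β)
      (Option.elim' (Ψ (n + 1) β) fun j : Fin (n + 2) => supFun Φ Ψ n (T.seqFace j β))

noncomputable def sup (Φ Ψ : ∀ n : ℕ, T.IncSeq n → S.Idx) : CoherentIndexFun S T where
  toFun {n} := supFun Φ Ψ n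
  le_face {n} β j := S.le_upperBound_of _
    (Option.elim' (Ψ (n + 1) β) fun j => supFun Φ Ψ n (T.seqFace j β)) (some j)

lemma le_sup_left (Φ Ψ : ∀ n : ℕ, T.IncSeq n → S.Idx) :
    ∀ {n : ℕ} (β : T.IncSeq n), S.le (Φ n β) ((sup Φ Ψ).toFun β)
  | 0, _ => S.le_upperBound _ _
  | _ + 1, _ => S.le_upperBound _ _

lemma le_sup_right (Φ Ψ : ∀ n : ℕ, T.IncSeq n → S.Idx) :
    ∀ {n : ℕ} (β : T.IncSeq n), S.le (Ψ n β) ((sup Φ Ψ).toFun β)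
  | 0, _ => S.le_upperBound_of _ (fun _ => _) ()
  | _ + 1, _ => S.le_upperBound_of _ (Option.elim' _ _) none

end CoherentIndexFun

namespace FPCoherentMap

def comp (F : FPCoherentMap S' T) (g : S.Hom S') : FPCoherentMap S T where
  φ β := g.idx (F.φ β)
  f β w := F.f β (g.app _ w.1, w.2)
  f_cont β := (F.f_cont β).comp (((g.app_cont _).comp continuous_fst).prodMk continuous_snd)
  f_fp β x t := (F.f_fp β _ t).trans (g.app_fp _ x)
  φ_face β j := g.idx_mono _ _ (F.φ_face β j)
  φ_degen β j := g.idx_mono _ _ (F.φ_degen β j)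
  coh_face β j hb x t := by
    rw [F.coh_face β j hb, g.app_bond]
  coh_degen β j hb x t := by
    rw [g.app_bond _ _ (F.φ_degen β j), F.coh_degen β j hb]

def reindex (F : FPCoherentMap S T) (θ : CoherentIndexFun S T)
    (hF : ∀ {n : ℕ} (β : T.IncSeq n), S.le (F.φ β) (θ.toFun β)) : FPCoherentMap S T where
  φ := θ.toFun
  f β w := F.f β (S.bond _ _ (hF β) w.1, w.2)
  f_cont β := (F.f_cont β).comp (((S.bond_cont _ _ _).comp continuous_fst).prodMk continuous_snd)
  f_fp β x t := (F.f_fp β _ t).trans (S.bond_fp _ _ _ x)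
  φ_face := θ.le_face
  φ_degen := θ.le_degen
  coh_face β j hb x t := by
    simp only [F.coh_face β j hb, FibInvSys.bond_bond]
  coh_degen β j hb x t := by
    simp only [← F.coh_degen β j hb, FibInvSys.bond_bond]

section Concat

variable (F G : FPCoherentMap S.prodI T) (θ : CoherentIndexFun S.prodI T)
  (hF : ∀ {n : ℕ} (β : T.IncSeq n), S.le (F.φ β) (θ.toFun β))
  (hG : ∀ {n : ℕ} (β : T.IncSeq n), S.le (G.φ β) (θ.toFun β))
  (hFG : ∀ {n : ℕ} (β : T.IncSeq n) (x : S.obj (θ.toFun β)) (t : stdSimplex ℝ (Fin (n + 1))),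
    F.f β (S.prodI.bond _ _ (hF β) (x, 1), t) = G.f β (S.prodI.bond _ _ (hG β) (x, 0), t))

/-- `F` on the first half of the interval and `G` on the second, both first pulled back to the
common index function `θ` so that the two halves live over the same spaces. -/
noncomputable def concat : FPCoherentMap S.prodI T :=
  let P := (F.reindex θ hF).comp (S.prodIMap stretchLow continuous_stretchLow)
  let Q := (G.reindex θ hG).comp (S.prodIMap stretchHigh continuous_stretchHigh)
  { φ := θ.toFun
    f β w := if (w.1.2 : ℝ) ≤ 1 / 2 then P.f β w else Q.f β w
    f_cont β := (P.f_cont β).if_le (Q.f_cont β)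
      ((continuous_subtype_val.comp (S.continuous_prodI_snd _)).comp continuous_fst)
      continuous_const
      fun w hw => by
        show F.f β (S.prodI.bond _ _ (hF β) (w.1.1, stretchLow w.1.2), w.2) =
          G.f β (S.prodI.bond _ _ (hG β) (w.1.1, stretchHigh w.1.2), w.2)
        rw [stretchLow_of_eq_half hw, stretchHigh_of_eq_half hw]
        exact hFG β w.1.1 w.2
    f_fp β x t := by
      split_ifs
      exacts [P.f_fp β x t, Q.f_fp β x t]
    φ_face := θ.le_face
    φ_degen := θ.le_degen
    coh_face β j hb x t := by
      by_cases h : (x.2 : ℝ) ≤ 1 / 2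
      · simp only [FibInvSys.prodI, h, ↓reduceIte]
        exact P.coh_face β j hb x t
      · simp only [FibInvSys.prodI, h, ↓reduceIte]
        exact Q.coh_face β j hb x t
    coh_degen β j hb x t := by
      by_cases h : (x.2 : ℝ) ≤ 1 / 2
      · simp only [FibInvSys.prodI, h, ↓reduceIte]
        exact P.coh_degen β j hb x t
      · simp only [FibInvSys.prodI, h, ↓reduceIte]
        exact Q.coh_degen β j hb x t }

lemma concat_f_zero {n : ℕ} (β : T.IncSeq n) (x : S.obj (θ.toFun β))
    (t : stdSimplex ℝ (Fin (n + 1))) :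
    (F.concat G θ hF hG hFG).f β ((x, 0), t) = F.f β ((S.bond _ _ (hF β) x, 0), t) := by
  show ite _ _ _ = _
  rw [if_pos (by norm_num)]
  exact congrArg (fun s => F.f β ((S.bond _ _ (hF β) x, s), t)) stretchLow_zero

lemma concat_f_one {n : ℕ} (β : T.IncSeq n) (x : S.obj (θ.toFun β))
    (t : stdSimplex ℝ (Fin (n + 1))) :
    (F.concat G θ hF hG hFG).f β ((x, 1), t) = G.f β ((S.bond _ _ (hG β) x, 1), t) := by
  show ite _ _ _ = _
  rw [if_neg (by norm_num)]
  exact congrArg (fun s => G.f β ((S.bond _ _ (hG β) x, s), t)) stretchHigh_one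

end Concat

end FPCoherentMap

namespace FPCoherentHomotopy

variable {f g h : FPCoherentMap S T}

lemma at_zero_bond (H : FPCoherentHomotopy f g) {n : ℕ} (β : T.IncSeq n) {a : S.Idx}
    (ha : S.le (H.F.φ β) a) (x : S.obj a) (t : stdSimplex ℝ (Fin (n + 1))) :
    H.F.f β ((S.bond _ _ ha x, 0), t) =
      f.f β (S.bond _ _ (S.le_trans _ _ _ (H.le_left β) ha) x, t) :=
  (H.at_zero β _ t).trans (congrArg (fun y => f.f β (y, t)) (S.bond_comp _ _ _ _ _ x))

lemma at_one_bond (H : FPCoherentHomotopy f g) {n : ℕ} (β : T.IncSeq n) {a : S.Idx}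
    (ha : S.le (H.F.φ β) a) (x : S.obj a) (t : stdSimplex ℝ (Fin (n + 1))) :
    H.F.f β ((S.bond _ _ ha x, 1), t) =
      g.f β (S.bond _ _ (S.le_trans _ _ _ (H.le_right β) ha) x, t) :=
  (H.at_one β _ t).trans (congrArg (fun y => g.f β (y, t)) (S.bond_comp _ _ _ _ _ x))

def refl (f : FPCoherentMap S T) : FPCoherentHomotopy f f where
  F := f.comp S.prodIFst
  le_left _ := S.le_refl _
  le_right _ := S.le_refl _
  at_zero β x t := congrArg (fun y => f.f β (y, t)) (S.bond_id _ x).symm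
  at_one β x t := congrArg (fun y => f.f β (y, t)) (S.bond_id _ x).symm

def symm (H : FPCoherentHomotopy f g) : FPCoherentHomotopy g f where
  F := H.F.comp (S.prodIMap σ continuous_symm)
  le_left := H.le_right
  le_right := H.le_left
  at_zero β x t := (congrArg (fun s => H.F.f β ((x, s), t)) symm_zero).trans (H.at_one β x t)
  at_one β x t := (congrArg (fun s => H.F.f β ((x, s), t)) symm_one).trans (H.at_zero β x t)

noncomputable def trans (H₁ : FPCoherentHomotopy f g) (H₂ : FPCoherentHomotopy g h) :
    FPCoherentHomotopy f h :=
  let θ := CoherentIndexFun.sup (S := S.prodI) (fun _ => H₁.F.φ) (fun _ => H₂.F.φ)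
  have h₁ {n : ℕ} (β : T.IncSeq n) :=
    CoherentIndexFun.le_sup_left (fun _ => H₁.F.φ) (fun _ => H₂.F.φ) β
  have h₂ {n : ℕ} (β : T.IncSeq n) :=
    CoherentIndexFun.le_sup_right (fun _ => H₁.F.φ) (fun _ => H₂.F.φ) β
  { F := H₁.F.concat H₂.F θ h₁ h₂ fun β x t =>
      (H₁.at_one_bond β (h₁ β) x t).trans (H₂.at_zero_bond β (h₂ β) x t).symm
    le_left β := S.le_trans _ _ _ (H₁.le_left β) (h₁ β)
    le_right β := S.le_trans _ _ _ (H₂.le_right β) (h₂ β)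
    at_zero β x t := (FPCoherentMap.concat_f_zero ..).trans (H₁.at_zero_bond β (h₁ β) x t)
    at_one β x t := (FPCoherentMap.concat_f_one ..).trans (H₂.at_one_bond β (h₂ β) x t) }

end FPCoherentHomotopy

end Coherent

theorem fpCohHomotopic_equivalence_general (B0 : Type u) [TopologicalSpace B0]
    (S T : FibInvSys B0) :
    Reflexive (fun f g : FPCoherentMap S T => FPCohHomotopic f g) ∧
    Symmetric (fun f g : FPCoherentMap S T => FPCohHomotopic f g) ∧
    Transitive (fun f g : FPCoherentMap S T => FPCohHomotopic f g) :=
  ⟨fun f => ⟨.refl f⟩, fun _ _ ⟨H⟩ => ⟨H.symm⟩, fun _ _ _ ⟨H₁⟩ ⟨H₂⟩ => ⟨H₁.trans H₂⟩⟩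

/-- Proposition 2.1: the f.p. coherent homotopy relation on coherent maps over `B0` between two
inverse systems is an equivalence relation. -/
theorem fpCohHomotopic_equivalence (B0 : Type u) [TopologicalSpace B0] [MetrizableSpace B0]
    (S T : FibInvSys B0) :
    Reflexive (fun f g : FPCoherentMap S T => FPCohHomotopic f g) ∧
    Symmetric (fun f g : FPCoherentMap S T => FPCohHomotopic f g) ∧
    Transitive (fun f g : FPCoherentMap S T => FPCohHomotopic f g) :=
  fpCohHomotopic_equivalence_general B0 S T
end
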